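/- arXiv:2005.00643 — 2 statements merged into one kernel-verified Lean document; each statement's English description precedes it below -/
import Mathlib

section
/- On ℝ⁸ with coordinates (x₁, x₂, u₁, u₂, f, g, h, t), the inclusion of the Pfaffian system I = span(dx₁ − u₁ dt, dx₂ − u₂ dt) into J = span(I, du₁ + f du₂ − g dt, df − h dt, dg − (f+h) du₂) has first relative extension I₁ = span(I, du₁ + f du₂ − g dt); and the Cartan system of I₁ has rank 7 while the Cartan system of I (pulled back) has rank 5, so rank 𝒞(I₁) − rank 𝒞(I) = 2 > 1 = rank(I₁) − rank(I). -/
noncomputable section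

abbrev Pt (d : ℕ) := Fin d → ℝ

/-- A 1-form on `ℝᵈ`, as a field of continuous linear functionals. -/
abbrev Form1 (d : ℕ) := Pt d → Pt d →L[ℝ] ℝ

/-- The constant-coefficient linear functional `v ↦ ∑ i, c i * v i`. -/
def lf {d : ℕ} (c : Fin d → ℝ) : Pt d →L[ℝ] ℝ :=
  ∑ i, c i • (ContinuousLinearMap.proj i : (Fin d → ℝ) →L[ℝ] ℝ)

/-- The exterior derivative of a 1-form, evaluated at `p` on `(v, w)`. -/
def extDerivForm1 {d : ℕ} (ω : Form1 d) (p v w : Pt d) : ℝ :=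
  fderiv ℝ (fun q => ω q w) p v - fderiv ℝ (fun q => ω q v) p w

/-- The pointwise span of a set of 1-forms at a point. -/
def spanAt {d : ℕ} (forms : Set (Form1 d)) (p : Pt d) :
    Submodule ℝ (Pt d →L[ℝ] ℝ) :=
  Submodule.span ℝ ((fun ω => ω p) '' forms)

/-- The space of Cauchy-characteristic directions of a Pfaffian system at `p`. -/
def charSpace {d : ℕ} (forms : Set (Form1 d)) (p : Pt d) : Set (Pt d) :=
  {v | ∀ ω ∈ forms, ω p v = 0 ∧ ∃ φ ∈ spanAt forms p, ∀ w, extDerivForm1 ω p v w = φ w}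

/-- The Cartan system of a Pfaffian system at `p`: the annihilator of the
Cauchy-characteristic directions. -/
def CartanAt {d : ℕ} (forms : Set (Form1 d)) (p : Pt d) :
    Submodule ℝ (Pt d →L[ℝ] ℝ) where
  carrier := {φ | ∀ v ∈ charSpace forms p, φ v = 0}
  add_mem' := by
    intro a b ha hb v hv
    simp [ha v hv, hb v hv]
  zero_mem' := by intro v hv; simp
  smul_mem' := by
    intro c a ha v hv
    simp [ha v hv]

-- Coordinates on ℝ⁸: x₁ = 0, x₂ = 1, u₁ = 2, u₂ = 3, f = 4, g = 5, h = 6, t = 7.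
/-- `dx₁ − u₁ dt`. -/
def ϑ₁ : Form1 8 := fun p => lf ![1, 0, 0, 0, 0, 0, 0, -(p 2)]

/-- `dx₂ − u₂ dt`. -/
def ϑ₂ : Form1 8 := fun p => lf ![0, 1, 0, 0, 0, 0, 0, -(p 3)]

/-- `du₁ + f du₂ − g dt`. -/
def ϖ₁ : Form1 8 := fun p => lf ![0, 0, 1, p 4, 0, 0, 0, -(p 5)]

/-- `df − h dt`. -/
def ϖ₂ : Form1 8 := fun p => lf ![0, 0, 0, 0, 1, 0, 0, -(p 6)]

/-- `dg − (f + h) du₂`. -/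
def ϖ₃ : Form1 8 := fun p => lf ![0, 0, 0, -(p 4 + p 6), 0, 1, 0, 0]

lemma lf_apply {d : ℕ} (c : Fin d → ℝ) (v : Pt d) : lf c v = ∑ i, c i * v i := by
  simp [lf]

lemma lf_single {d : ℕ} (c : Fin d → ℝ) (i : Fin d) : lf c (Pi.single i 1) = c i := by
  simp [lf_apply, Pi.single_apply, mul_ite]

lemma lf8 (a b c d e f g h : ℝ) (v : Pt 8) :
    lf ![a,b,c,d,e,f,g,h] v =
      a*v 0 + b*v 1 + c*v 2 + d*v 3 + e*v 4 + f*v 5 + g*v 6 + h*v 7 := by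
  rw [lf_apply, Fin.sum_univ_eight]; rfl

lemma th1_apply (p v : Pt 8) : ϑ₁ p v = v 0 - p 2 * v 7 := by rw [ϑ₁, lf8]; ring
lemma th2_apply (p v : Pt 8) : ϑ₂ p v = v 1 - p 3 * v 7 := by rw [ϑ₂, lf8]; ring
lemma w1_apply (p v : Pt 8) : ϖ₁ p v = v 2 + p 4 * v 3 - p 5 * v 7 := by rw [ϖ₁, lf8]; ring
lemma w2_apply (p v : Pt 8) : ϖ₂ p v = v 4 - p 6 * v 7 := by rw [ϖ₂, lf8]; ring
lemma w3_apply (p v : Pt 8) : ϖ₃ p v = v 5 - (p 4 + p 6) * v 3 := by rw [ϖ₃, lf8]; ring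

lemma fderiv_affine (a b c : ℝ) (i j : Fin 8) (p v : Pt 8) :
    fderiv ℝ (fun q : Pt 8 => a + q i * b - q j * c) p v = v i * b - v j * c := by
  have hi : HasFDerivAt (fun q : Pt 8 => q i)
      (ContinuousLinearMap.proj i : (Fin 8 → ℝ) →L[ℝ] ℝ) p :=
    (ContinuousLinearMap.proj i : (Fin 8 → ℝ) →L[ℝ] ℝ).hasFDerivAt
  have hj : HasFDerivAt (fun q : Pt 8 => q j)
      (ContinuousLinearMap.proj j : (Fin 8 → ℝ) →L[ℝ] ℝ) p :=
    (ContinuousLinearMap.proj j : (Fin 8 → ℝ) →L[ℝ] ℝ).hasFDerivAt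
  have h : HasFDerivAt (fun q : Pt 8 => a + q i * b - q j * c) _ p :=
    ((hi.mul_const b).const_add a).sub (hj.mul_const c)
  rw [h.fderiv]
  simp [mul_comm]

lemma extDeriv_th1 (p v w : Pt 8) : extDerivForm1 ϑ₁ p v w = v 7 * w 2 - v 2 * w 7 := by
  have e : ∀ u : Pt 8, (fun q : Pt 8 => ϑ₁ q u) = fun q => u 0 + q 0 * 0 - q 2 * u 7 := by
    intro u; funext q; rw [th1_apply]; ring
  rw [extDerivForm1, e w, e v, fderiv_affine, fderiv_affine]; ring

lemma extDeriv_th2 (p v w : Pt 8) : extDerivForm1 ϑ₂ p v w = v 7 * w 3 - v 3 * w 7 := by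
  have e : ∀ u : Pt 8, (fun q : Pt 8 => ϑ₂ q u) = fun q => u 1 + q 0 * 0 - q 3 * u 7 := by
    intro u; funext q; rw [th2_apply]; ring
  rw [extDerivForm1, e w, e v, fderiv_affine, fderiv_affine]; ring

lemma extDeriv_w1 (p v w : Pt 8) :
    extDerivForm1 ϖ₁ p v w = v 4 * w 3 - v 3 * w 4 + v 7 * w 5 - v 5 * w 7 := by
  have e : ∀ u : Pt 8, (fun q : Pt 8 => ϖ₁ q u) = fun q => u 2 + q 4 * u 3 - q 5 * u 7 := by
    intro u; funext q; rw [w1_apply]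
  rw [extDerivForm1, e w, e v, fderiv_affine, fderiv_affine]; ring

lemma spanAt_I (p : Pt 8) :
    spanAt {ϑ₁, ϑ₂} p = Submodule.span ℝ {ϑ₁ p, ϑ₂ p} := by
  rw [spanAt, Set.image_insert_eq, Set.image_singleton]

lemma spanAt_I1 (p : Pt 8) :
    spanAt {ϑ₁, ϑ₂, ϖ₁} p = Submodule.span ℝ {ϑ₁ p, ϑ₂ p, ϖ₁ p} := by
  rw [spanAt, Set.image_insert_eq, Set.image_insert_eq, Set.image_singleton]

lemma spanAt_J (p : Pt 8) :
    spanAt {ϑ₁, ϑ₂, ϖ₁, ϖ₂, ϖ₃} p =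
      Submodule.span ℝ {ϑ₁ p, ϑ₂ p, ϖ₁ p, ϖ₂ p, ϖ₃ p} := by
  rw [spanAt, Set.image_insert_eq, Set.image_insert_eq, Set.image_insert_eq,
    Set.image_insert_eq, Set.image_singleton]

lemma mem_charI (p v : Pt 8) :
    v ∈ charSpace {ϑ₁, ϑ₂} p ↔
      v 0 = 0 ∧ v 1 = 0 ∧ v 2 = 0 ∧ v 3 = 0 ∧ v 7 = 0 := by
  constructor
  · intro h
    obtain ⟨h1, φ, hφ, he⟩ := h ϑ₁ (Set.mem_insert _ _)
    obtain ⟨h2, ψ, hψ, he'⟩ := h ϑ₂ (Set.mem_insert_of_mem _ rfl)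
    rw [spanAt_I, Submodule.mem_span_pair] at hφ hψ
    obtain ⟨a, b, hab⟩ := hφ
    obtain ⟨c, d, hcd⟩ := hψ
    have key : ∀ u : Pt 8, v 7 * u 2 - v 2 * u 7 =
        a * (u 0 - p 2 * u 7) + b * (u 1 - p 3 * u 7) := by
      intro u
      rw [← extDeriv_th1 p v u, he u, ← hab]
      simp [th1_apply, th2_apply]
    have key' : ∀ u : Pt 8, v 7 * u 3 - v 3 * u 7 =
        c * (u 0 - p 2 * u 7) + d * (u 1 - p 3 * u 7) := by
      intro u
      rw [← extDeriv_th2 p v u, he' u, ← hcd]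
      simp [th1_apply, th2_apply]
    have k0 := key (Pi.single 0 1)
    have k1 := key (Pi.single 1 1)
    have k2 := key (Pi.single 2 1)
    have k7 := key (Pi.single 7 1)
    have k3 := key' (Pi.single 3 1)
    have k7' := key' (Pi.single 7 1)
    simp [Pi.single_apply] at k0 k1 k2 k7 k3 k7'
    rw [th1_apply] at h1
    rw [th2_apply] at h2
    have hv7 : v 7 = 0 := k2
    have hv2 : v 2 = 0 := by
      have := k7; rw [← k0, ← k1] at this; linarith
    have hv3 : v 3 = 0 := by
      have hc : c = 0 := by have := key' (Pi.single 0 1); simpa [Pi.single_apply] using this.symm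
      have hd : d = 0 := by have := key' (Pi.single 1 1); simpa [Pi.single_apply] using this.symm
      rw [hc, hd] at k7'; linarith
    refine ⟨by rw [hv7] at h1; linarith, by rw [hv7] at h2; linarith, hv2, hv3, hv7⟩
  · rintro ⟨h0, h1, h2, h3, h7⟩ ω hω
    have hcases : ω = ϑ₁ ∨ ω = ϑ₂ := by simpa using hω
    rcases hcases with rfl | rfl
    · refine ⟨by rw [th1_apply, h0, h7]; ring, 0, Submodule.zero_mem _, ?_⟩
      intro w; rw [extDeriv_th1, h2, h7]; simp
    · refine ⟨by rw [th2_apply, h1, h7]; ring, 0, Submodule.zero_mem _, ?_⟩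
      intro w; rw [extDeriv_th2, h3, h7]; simp

lemma mem_span_triple {M : Type*} [AddCommGroup M] [Module ℝ M] (x a b c : M) :
    x ∈ Submodule.span ℝ ({a, b, c} : Set M) ↔
      ∃ r s t : ℝ, x = r • a + s • b + t • c := by
  rw [Submodule.mem_span_insert]
  constructor
  · rintro ⟨r, z, hz, rfl⟩
    rw [Submodule.mem_span_pair] at hz
    obtain ⟨s, t, rfl⟩ := hz
    exact ⟨r, s, t, by module⟩
  · rintro ⟨r, s, t, rfl⟩
    exact ⟨r, s • b + t • c, Submodule.mem_span_pair.2 ⟨s, t, rfl⟩, by module⟩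

lemma mem_charI1 (p v : Pt 8) :
    v ∈ charSpace {ϑ₁, ϑ₂, ϖ₁} p ↔
      v 0 = 0 ∧ v 1 = 0 ∧ v 2 = 0 ∧ v 3 = 0 ∧ v 4 = 0 ∧ v 5 = 0 ∧ v 7 = 0 := by
  constructor
  · intro h
    obtain ⟨h1, φ, hφ, he⟩ := h ϑ₁ (Set.mem_insert _ _)
    obtain ⟨h2, ψ, hψ, he'⟩ := h ϑ₂ (Set.mem_insert_of_mem _ (Set.mem_insert _ _))
    obtain ⟨h3, χ, hχ, he''⟩ := h ϖ₁ (Set.mem_insert_of_mem _ (Set.mem_insert_of_mem _ rfl))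
    rw [spanAt_I1, mem_span_triple] at hφ hψ hχ
    obtain ⟨a, b, c, rfl⟩ := hφ
    obtain ⟨a', b', c', rfl⟩ := hψ
    obtain ⟨a'', b'', c'', rfl⟩ := hχ
    have key : ∀ u : Pt 8, v 7 * u 2 - v 2 * u 7 =
        a * (u 0 - p 2 * u 7) + b * (u 1 - p 3 * u 7)
          + c * (u 2 + p 4 * u 3 - p 5 * u 7) := by
      intro u
      rw [← extDeriv_th1 p v u, he u]
      simp [th1_apply, th2_apply, w1_apply]
    have key' : ∀ u : Pt 8, v 7 * u 3 - v 3 * u 7 =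
        a' * (u 0 - p 2 * u 7) + b' * (u 1 - p 3 * u 7)
          + c' * (u 2 + p 4 * u 3 - p 5 * u 7) := by
      intro u
      rw [← extDeriv_th2 p v u, he' u]
      simp [th1_apply, th2_apply, w1_apply]
    have key'' : ∀ u : Pt 8, v 4 * u 3 - v 3 * u 4 + v 7 * u 5 - v 5 * u 7 =
        a'' * (u 0 - p 2 * u 7) + b'' * (u 1 - p 3 * u 7)
          + c'' * (u 2 + p 4 * u 3 - p 5 * u 7) := by
      intro u
      rw [← extDeriv_w1 p v u, he'' u]
      simp [th1_apply, th2_apply, w1_apply]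
    -- from ϑ₂ : v 7 = 0 and v 3 = 0
    have ha' : a' = 0 := by have := key' (Pi.single 0 1); simpa [Pi.single_apply] using this.symm
    have hb' : b' = 0 := by have := key' (Pi.single 1 1); simpa [Pi.single_apply] using this.symm
    have hc' : c' = 0 := by have := key' (Pi.single 2 1); simpa [Pi.single_apply] using this.symm
    have hv7 : v 7 = 0 := by
      have := key' (Pi.single 3 1); simp [Pi.single_apply, ha', hb', hc'] at this; linarith
    have hv3 : v 3 = 0 := by
      have := key' (Pi.single 7 1); simp [Pi.single_apply, ha', hb', hc'] at this; linarith
    -- from ϑ₁ : c = v 7 = 0 hence v 2 = 0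
    have ha : a = 0 := by have := key (Pi.single 0 1); simpa [Pi.single_apply] using this.symm
    have hb : b = 0 := by have := key (Pi.single 1 1); simpa [Pi.single_apply] using this.symm
    have hc : c = 0 := by
      have := key (Pi.single 2 1); simp [Pi.single_apply, ha, hb, hv7] at this; linarith
    have hv2 : v 2 = 0 := by
      have := key (Pi.single 7 1); simp [Pi.single_apply, ha, hb, hc] at this; linarith
    -- from ϖ₁ : v 4 = 0 and v 5 = 0
    have ha'' : a'' = 0 := by
      have := key'' (Pi.single 0 1); simp [Pi.single_apply, hv3] at this; linarith
    have hb'' : b'' = 0 := by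
      have := key'' (Pi.single 1 1); simp [Pi.single_apply, hv3] at this; linarith
    have hc'' : c'' = 0 := by
      have := key'' (Pi.single 2 1); simp [Pi.single_apply, hv3] at this; linarith
    have hv4 : v 4 = 0 := by
      have := key'' (Pi.single 3 1)
      simp [Pi.single_apply, ha'', hb'', hc'', hv7] at this; linarith
    have hv5 : v 5 = 0 := by
      have := key'' (Pi.single 7 1)
      simp [Pi.single_apply, ha'', hb'', hc''] at this; linarith
    rw [th1_apply] at h1
    rw [th2_apply] at h2
    refine ⟨by rw [hv7] at h1; linarith, by rw [hv7] at h2; linarith,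
      hv2, hv3, hv4, hv5, hv7⟩
  · rintro ⟨h0, h1, h2, h3, h4, h5, h7⟩ ω hω
    have hcases : ω = ϑ₁ ∨ ω = ϑ₂ ∨ ω = ϖ₁ := by simpa using hω
    rcases hcases with rfl | rfl | rfl
    · refine ⟨by rw [th1_apply, h0, h7]; ring, 0, Submodule.zero_mem _, ?_⟩
      intro w; rw [extDeriv_th1, h2, h7]; simp
    · refine ⟨by rw [th2_apply, h1, h7]; ring, 0, Submodule.zero_mem _, ?_⟩
      intro w; rw [extDeriv_th2, h3, h7]; simp
    · refine ⟨by rw [w1_apply, h2, h3, h7]; ring, 0, Submodule.zero_mem _, ?_⟩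
      intro w; rw [extDeriv_w1, h3, h4, h5, h7]; simp

abbrev D8 := (Pt 8) →L[ℝ] ℝ

lemma finrank_D8 : Module.finrank ℝ D8 = 8 := by
  rw [← (LinearMap.toContinuousLinearMap :
      ((Pt 8) →ₗ[ℝ] ℝ) ≃ₗ[ℝ] D8).finrank_eq]
  simp [Module.finrank_linearMap]

def L3 : D8 →ₗ[ℝ] (Fin 3 → ℝ) where
  toFun φ := ![φ (Pi.single 4 1), φ (Pi.single 5 1), φ (Pi.single 6 1)]
  map_add' := by intro x y; funext i; fin_cases i <;> simp
  map_smul' := by intro c x; funext i; fin_cases i <;> simp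

def L1 : D8 →ₗ[ℝ] ℝ where
  toFun φ := φ (Pi.single 6 1)
  map_add' := by intro x y; simp
  map_smul' := by intro c x; simp

lemma L3_surj : Function.Surjective L3 := by
  intro c
  refine ⟨lf ![0,0,0,0,c 0,c 1,c 2,0], ?_⟩
  funext i
  fin_cases i <;> simp [L3, lf_single] <;> rfl

lemma L1_surj : Function.Surjective L1 := by
  intro c
  refine ⟨lf ![0,0,0,0,0,0,c,0], ?_⟩
  show lf ![0,0,0,0,0,0,c,0] (Pi.single 6 1) = c
  rw [lf_single]
  rfl

lemma CartanI_eq (p : Pt 8) : CartanAt {ϑ₁, ϑ₂} p = LinearMap.ker L3 := by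
  ext φ
  constructor
  · intro hφ
    rw [LinearMap.mem_ker]
    funext i
    fin_cases i
    · exact hφ _ ((mem_charI p _).2 (by simp [Pi.single_apply]))
    · exact hφ _ ((mem_charI p _).2 (by simp [Pi.single_apply]))
    · exact hφ _ ((mem_charI p _).2 (by simp [Pi.single_apply]))
  · intro hφ v hv
    rw [mem_charI] at hv
    obtain ⟨h0, h1, h2, h3, h7⟩ := hv
    have hv' : v = v 4 • (Pi.single 4 1 : Pt 8) + v 5 • (Pi.single 5 1 : Pt 8)
        + v 6 • (Pi.single 6 1 : Pt 8) := by
      funext i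
      fin_cases i <;> simp [Pi.single_apply, h0, h1, h2, h3, h7]
    have e4 : φ (Pi.single 4 1) = 0 := congrFun hφ 0
    have e5 : φ (Pi.single 5 1) = 0 := congrFun hφ 1
    have e6 : φ (Pi.single 6 1) = 0 := congrFun hφ 2
    rw [hv']
    simp [e4, e5, e6]

lemma CartanI1_eq (p : Pt 8) : CartanAt {ϑ₁, ϑ₂, ϖ₁} p = LinearMap.ker L1 := by
  ext φ
  constructor
  · intro hφ
    exact hφ _ ((mem_charI1 p _).2 (by simp [Pi.single_apply]))
  · intro hφ v hv
    rw [mem_charI1] at hv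
    obtain ⟨h0, h1, h2, h3, h4, h5, h7⟩ := hv
    have hv' : v = v 6 • (Pi.single 6 1 : Pt 8) := by
      funext i
      fin_cases i <;> simp [Pi.single_apply, h0, h1, h2, h3, h4, h5, h7]
    rw [hv']
    have e6 : φ (Pi.single 6 1) = 0 := hφ
    simp [e6]

lemma rank_CartanI (p : Pt 8) : Module.finrank ℝ (CartanAt {ϑ₁, ϑ₂} p) = 5 := by
  have h := LinearMap.finrank_range_add_finrank_ker L3
  rw [LinearMap.range_eq_top.2 L3_surj, finrank_top, finrank_D8, ← CartanI_eq p] at h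
  simp only [Module.finrank_fin_fun] at h
  exact Nat.add_left_cancel h

lemma rank_CartanI1 (p : Pt 8) : Module.finrank ℝ (CartanAt {ϑ₁, ϑ₂, ϖ₁} p) = 7 := by
  have h := LinearMap.finrank_range_add_finrank_ker L1
  rw [LinearMap.range_eq_top.2 L1_surj, finrank_top, finrank_D8, ← CartanI1_eq p] at h
  simp only [Module.finrank_self] at h
  exact Nat.add_left_cancel h

lemma mem_span_five {M : Type*} [AddCommGroup M] [Module ℝ M] (x a b c d e : M) :
    x ∈ Submodule.span ℝ ({a, b, c, d, e} : Set M) ↔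
      ∃ r s t u w : ℝ, x = r • a + s • b + t • c + u • d + w • e := by
  rw [Submodule.mem_span_insert]
  constructor
  · rintro ⟨r, z, hz, rfl⟩
    rw [Submodule.mem_span_insert] at hz
    obtain ⟨s, z2, hz2, rfl⟩ := hz
    rw [mem_span_triple] at hz2
    obtain ⟨t, u, w, rfl⟩ := hz2
    exact ⟨r, s, t, u, w, by module⟩
  · rintro ⟨r, s, t, u, w, rfl⟩
    exact ⟨r, s • b + t • c + u • d + w • e,
      Submodule.mem_span_insert.2 ⟨s, t • c + u • d + w • e,
        (mem_span_triple _ _ _ _).2 ⟨t, u, w, rfl⟩, by module⟩, by module⟩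

lemma inter_eq (p : Pt 8) :
    CartanAt {ϑ₁, ϑ₂} p ⊓ spanAt {ϑ₁, ϑ₂, ϖ₁, ϖ₂, ϖ₃} p = spanAt {ϑ₁, ϑ₂, ϖ₁} p := by
  apply le_antisymm
  · rintro φ hmem
    obtain ⟨hC, hJ⟩ := Submodule.mem_inf.1 hmem
    rw [spanAt_J, mem_span_five] at hJ
    obtain ⟨r, s, t, u, w, rfl⟩ := hJ
    have h4 : (Pi.single 4 1 : Pt 8) ∈ charSpace {ϑ₁, ϑ₂} p :=
      (mem_charI p _).2 (by simp [Pi.single_apply])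
    have h5 : (Pi.single 5 1 : Pt 8) ∈ charSpace {ϑ₁, ϑ₂} p :=
      (mem_charI p _).2 (by simp [Pi.single_apply])
    have e4 := hC _ h4
    have e5 := hC _ h5
    have hu : u = 0 := by
      simpa [th1_apply, th2_apply, w1_apply, w2_apply, w3_apply, Pi.single_apply] using e4
    have hw : w = 0 := by
      simpa [th1_apply, th2_apply, w1_apply, w2_apply, w3_apply, Pi.single_apply, hu] using e5
    rw [spanAt_I1, hu, hw]
    simp only [zero_smul, add_zero]
    exact (mem_span_triple _ _ _ _).2 ⟨r, s, t, rfl⟩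
  · rw [spanAt_I1, Submodule.span_le]
    rintro x hx
    simp only [Set.mem_insert_iff, Set.mem_singleton_iff] at hx
    have hJ : x ∈ spanAt {ϑ₁, ϑ₂, ϖ₁, ϖ₂, ϖ₃} p := by
      rw [spanAt_J]
      apply Submodule.subset_span
      rcases hx with rfl | rfl | rfl <;> simp
    have hC : x ∈ CartanAt {ϑ₁, ϑ₂} p := by
      intro v hv
      rw [mem_charI] at hv
      obtain ⟨h0, h1, h2, h3, h7⟩ := hv
      rcases hx with rfl | rfl | rfl
      · rw [th1_apply, h0, h7]; ring
      · rw [th2_apply, h1, h7]; ring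
      · rw [w1_apply, h2, h3, h7]; ring
    exact Submodule.mem_inf.2 ⟨hC, hJ⟩

/-- For `I = ⟨dx₁ − u₁ dt, dx₂ − u₂ dt⟩ ⊂ J = ⟨I, du₁ + f du₂ − g dt, df − h dt,
dg − (f+h) du₂⟩` on ℝ⁸: the first relative extension is
`I₁ = 𝒞(I) ∩ J = ⟨I, du₁ + f du₂ − g dt⟩`, and `rank 𝒞(I₁) = 7` while
`rank 𝒞(I) = 5`, so `rank 𝒞(I₁) − rank 𝒞(I) = 2 > 1 = rank I₁ − rank I`. -/
theorem stmt14 :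
    (∀ p : Pt 8, CartanAt {ϑ₁, ϑ₂} p ⊓ spanAt {ϑ₁, ϑ₂, ϖ₁, ϖ₂, ϖ₃} p =
      spanAt {ϑ₁, ϑ₂, ϖ₁} p) ∧
    (∀ p : Pt 8, Module.finrank ℝ (CartanAt {ϑ₁, ϑ₂, ϖ₁} p) = 7) ∧
    (∀ p : Pt 8, Module.finrank ℝ (CartanAt {ϑ₁, ϑ₂} p) = 5) := by
  exact ⟨fun p => inter_eq p, fun p => rank_CartanI1 p, fun p => rank_CartanI p⟩
end
end

section
/- A control-type system (M, I; τ) is strongly linear if and only if its total prolongation (pr⁽¹⁾M, pr⁽¹⁾I; τ) is strongly linear. -/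
noncomputable section

/-- The coordinate 1-form `dx_i`. -/
def dcoord {d : ℕ} (i : Fin d) : Form1 d := fun _ => lf (Pi.single i 1)

/-- The exterior derivative of a 1-form, evaluated at `p` on `(v, w)`. -/
def extDeriv1 {d : ℕ} (ω : Form1 d) (p v w : Pt d) : ℝ :=
  fderiv ℝ (fun q => ω q w) p v - fderiv ℝ (fun q => ω q v) p w

/-- The 2-form `β` lies in the algebraic ideal generated by the 1-forms `forms`
at the point `p`. -/
def InIdeal2At {d : ℕ} (forms : Set (Form1 d)) (p : Pt d)
    (β : Pt d → Pt d → ℝ) : Prop :=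
  ∃ (k : ℕ) (g : Fin k → Form1 d) (lam : Fin k → Pt d → ℝ),
    (∀ i, g i ∈ forms) ∧
    ∀ v w, β v w = ∑ i, (lam i v * g i p w - lam i w * g i p v)

/-- The projection `ℝ^{d+m} → ℝᵈ` as a continuous linear map. -/
def projCLM (d m : ℕ) : (Fin (d + m) → ℝ) →L[ℝ] (Fin d → ℝ) :=
  ContinuousLinearMap.pi fun i : Fin d =>
    (ContinuousLinearMap.proj (Fin.castAdd m i) : (Fin (d + m) → ℝ) →L[ℝ] ℝ)

/-- The pullback of a 1-form on `ℝᵈ` to `ℝ^{d+m}` along the projection. -/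
def pbForm {d m : ℕ} (ω : Form1 d) : Form1 (d + m) :=
  fun p => (ω (projCLM d m p)).comp (projCLM d m)

-- Coordinates on `M = ℝ^{n+m+1}`: states `x¹,…,xⁿ`, controls `u¹,…,uᵐ`, time `t`.
/-- The index of the control coordinate `u^α`. -/
def uIdx (n m : ℕ) (α : Fin m) : Fin (n + m + 1) := Fin.castAdd 1 (Fin.natAdd n α)

/-- The index of the time coordinate `t`. -/
def tIdx (n m : ℕ) : Fin (n + m + 1) := Fin.last (n + m)

/-- The generators of the total prolongation `pr⁽¹⁾I` on `ℝ^{(n+m+1)+m}`: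
the pullbacks of the generators of `I` together with `du^α − λ^α dt`. -/
def totalProl (n m : ℕ) (If : Set (Form1 (n + m + 1))) :
    Set (Form1 (n + m + 1 + m)) :=
  ((fun ω => pbForm (m := m) ω) '' If) ∪
    Set.range (fun α : Fin m => fun p : Pt (n + m + 1 + m) =>
      pbForm (m := m) (dcoord (uIdx n m α)) p -
        p (Fin.natAdd (n + m + 1) α) • pbForm (m := m) (dcoord (tIdx n m)) p)

/-- The (smooth) sections of the Pfaffian bundle spanned by `K`. -/
def sectionsOf {d : ℕ} (K : Set (Form1 d)) : Set (Form1 d) :=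
  {ω | (∀ w, Differentiable ℝ fun p => ω p w) ∧ ∀ p, ω p ∈ spanAt K p}

/-- The derived system of `K`: sections `ω` of `K` with `dω ≡ 0 mod K`. -/
def derivedSys {d : ℕ} (K : Set (Form1 d)) : Set (Form1 d) :=
  {ω ∈ sectionsOf K | ∀ p, InIdeal2At K p (extDeriv1 ω p)}

/-- The derived flag `K⁽ᵏ⁾` of a Pfaffian system. -/
def flag {d : ℕ} (K : Set (Form1 d)) : ℕ → Set (Form1 d)
  | 0 => sectionsOf K
  | k + 1 => derivedSys (flag K k)

/-- A set of 1-forms is Frobenius if the exterior derivative of each of them lies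
in the algebraic ideal they generate. -/
def IsFrobenius {d : ℕ} (K : Set (Form1 d)) : Prop :=
  ∀ ω ∈ K, ∀ p, InIdeal2At K p (extDeriv1 ω p)

/-- Strong linearity of `(K; τ)`: the infinite derived system vanishes and each
`[K⁽ᵏ⁾, τ]` is Frobenius. -/
def StronglyLinear {d : ℕ} (K : Set (Form1 d)) (τ : Form1 d) : Prop :=
  (∃ k, ∀ ω ∈ flag K k, ∀ p w, ω p w = 0) ∧
  ∀ k, IsFrobenius (flag K k ∪ {τ})

namespace Aux
open Module Submodule

lemma lf_apply {d : ℕ} (c v : Pt d) : lf c v = ∑ i, c i * v i := by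
  simp [lf, ContinuousLinearMap.sum_apply, ContinuousLinearMap.smul_apply, smul_eq_mul]

lemma dcoord_apply {d : ℕ} (i : Fin d) (p v : Pt d) : dcoord i p v = v i := by
  simp [dcoord, lf_apply, Pi.single_apply]

/-- joint kernel of a set of forms at a point -/
def KerAt {d : ℕ} (K : Set (Form1 d)) (p v : Pt d) : Prop := ∀ ω ∈ K, ω p v = 0

lemma spanAt_kill {d : ℕ} {K : Set (Form1 d)} {p : Pt d} {ψ : Pt d →L[ℝ] ℝ}
    (hψ : ψ ∈ spanAt K p) {v : Pt d} (hv : KerAt K p v) : ψ v = 0 := by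
  induction hψ using Submodule.span_induction with
  | mem x hx => obtain ⟨ω, hω, rfl⟩ := hx; exact hv ω hω
  | zero => simp
  | add x y hx hy ihx ihy => simp [ihx, ihy]
  | smul a x hx ih => simp [ih]

lemma ideal_eval_zero {d : ℕ} {K : Set (Form1 d)} {p : Pt d} {β : Pt d → Pt d → ℝ}
    (h : InIdeal2At K p β) {v w : Pt d} (hv : KerAt K p v) (hw : KerAt K p w) :
    β v w = 0 := by
  obtain ⟨k, g, lam, hg, hβ⟩ := h
  rw [hβ]
  refine Finset.sum_eq_zero fun i _ => ?_
  rw [hv _ (hg i), hw _ (hg i)]; ring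

lemma extDeriv_antisymm {d : ℕ} (ω : Form1 d) (p v w : Pt d) :
    extDeriv1 ω p v w = - extDeriv1 ω p w v := by
  simp only [extDeriv1]; ring

lemma extDeriv_zero_left {d : ℕ} (ω : Form1 d) (p w : Pt d) :
    extDeriv1 ω p 0 w = 0 := by
  have h : (fun q => ω q (0 : Pt d)) = fun _ => (0:ℝ) := by
    funext q; simp
  simp [extDeriv1, h]

lemma extDeriv_add_left {d : ℕ} (ω : Form1 d)
    (hdiff : ∀ u, Differentiable ℝ fun q => ω q u) (p v v' w : Pt d) :
    extDeriv1 ω p (v + v') w = extDeriv1 ω p v w + extDeriv1 ω p v' w := by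
  have h : (fun q => ω q (v + v')) = fun q => ω q v + ω q v' := by
    funext q; simp
  rw [extDeriv1, extDeriv1, extDeriv1, h,
    fderiv_fun_add ((hdiff v).differentiableAt) ((hdiff v').differentiableAt)]
  simp; ring

lemma extDeriv_smul_left {d : ℕ} (ω : Form1 d)
    (hdiff : ∀ u, Differentiable ℝ fun q => ω q u) (p : Pt d) (c : ℝ) (v w : Pt d) :
    extDeriv1 ω p (c • v) w = c * extDeriv1 ω p v w := by
  have h : (fun q => ω q (c • v)) = fun q => c • ω q v := by
    funext q; simp
  rw [extDeriv1, extDeriv1, h, fderiv_fun_const_smul ((hdiff v).differentiableAt)]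
  simp [smul_eq_mul]; ring

end Aux
namespace Aux
open Module Submodule

section Criterion
variable {d : ℕ}

lemma inIdeal2At_of_ker (K : Set (Form1 d)) (p : Pt d) (β : Pt d → Pt d → ℝ)
    (hadd : ∀ v v' w, β (v + v') w = β v w + β v' w)
    (hsmul : ∀ (c : ℝ) v w, β (c • v) w = c * β v w)
    (hanti : ∀ v w, β v w = - β w v)
    (h0 : ∀ v w, KerAt K p v → KerAt K p w → β v w = 0) :
    InIdeal2At K p β := by
  classical
  -- second-slot linearity
  have hadd2 : ∀ v w w', β v (w + w') = β v w + β v w' := by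
    intro v w w'
    rw [hanti, hadd, hanti w v, hanti w' v]; ring
  have hsmul2 : ∀ (c : ℝ) v w, β v (c • w) = c * β v w := by
    intro c v w
    rw [hanti, hsmul, hanti w v]; ring
  -- finite spanning family from K
  obtain ⟨b, hbS, hbspan, hbind⟩ :=
    exists_linearIndependent ℝ ((fun ω => ω p) '' K)
  have hfin : b.Finite := hbind.setFinite
  set r := hfin.toFinset.card with hr
  let eqv : {x // x ∈ hfin.toFinset} ≃ Fin r := hfin.toFinset.equivFin
  let f : Fin r → (Pt d →L[ℝ] ℝ) := fun i => (eqv.symm i : _)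
  have hfb : ∀ i, f i ∈ b := fun i => hfin.mem_toFinset.mp (eqv.symm i).2
  have hgex : ∀ i, ∃ g ∈ K, g p = f i := by
    intro i
    obtain ⟨g, hg, hgp⟩ := hbS (hfb i)
    exact ⟨g, hg, hgp⟩
  choose g hgK hgp using hgex
  -- every value of K lies in span of the f i = g i p
  have hrange : Set.range f = b := by
    ext x
    constructor
    · rintro ⟨i, rfl⟩; exact hfb i
    · intro hx
      exact ⟨eqv ⟨x, hfin.mem_toFinset.mpr hx⟩, by simp [f]⟩
  have hspanf : Submodule.span ℝ (Set.range fun i => g i p) = spanAt K p := by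
    have : (Set.range fun i => g i p) = Set.range f := by
      ext x; simp only [Set.mem_range]
      constructor
      · rintro ⟨i, rfl⟩; exact ⟨i, (hgp i).symm⟩
      · rintro ⟨i, rfl⟩; exact ⟨i, hgp i⟩
    rw [this, hrange, spanAt, ← hbspan]
  -- kernel reduction
  have hker : ∀ v : Pt d, (∀ i, g i p v = 0) → KerAt K p v := by
    intro v hv
    have hall : ∀ ψ ∈ Submodule.span ℝ (Set.range fun i => g i p), ψ v = 0 := by
      intro ψ hψ
      induction hψ using Submodule.span_induction with
      | mem x hx => obtain ⟨i, rfl⟩ := hx; exact hv i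
      | zero => simp
      | add x y hx hy ihx ihy => simp [ihx, ihy]
      | smul a x hx ih => simp [ih]
    intro ω hω
    exact hall _ (hspanf ▸ Submodule.subset_span ⟨ω, hω, rfl⟩)
  -- the linear-algebraic construction
  let T : Pt d →ₗ[ℝ] (Fin r → ℝ) := LinearMap.pi fun i => (g i p).toLinearMap
  set K₀ := LinearMap.ker T with hK₀
  obtain ⟨C, hC⟩ := Submodule.exists_isCompl K₀
  let π := K₀.projectionOnto C hC
  have hπmem : ∀ x : Pt d, (π x : Pt d) ∈ K₀ := fun x => (π x).2
  have hsub : ∀ x : Pt d, x - (π x : Pt d) ∈ C := by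
    intro x
    obtain ⟨y, hy, z, hz, hyz⟩ := Submodule.mem_sup.mp
      (by rw [hC.sup_eq_top]; trivial : x ∈ K₀ ⊔ C)
    have hπx : (π x : Pt d) = y := by
      have : π x = π y + π z := by rw [← map_add, hyz]
      rw [this, Submodule.projectionOnto_apply_left hC ⟨y, hy⟩,
        Submodule.projectionOnto_apply_right hC ⟨z, hz⟩]
      simp
    rw [hπx, ← hyz]
    simpa using hz
  -- left inverse for T restricted to C
  have hinj : LinearMap.ker (T ∘ₗ C.subtype) = ⊥ := by
    rw [LinearMap.ker_eq_bot']
    intro c hc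
    have : (c : Pt d) ∈ K₀ ⊓ C := ⟨hc, c.2⟩
    rw [hC.inf_eq_bot] at this
    exact Subtype.ext this
  obtain ⟨Linv, hLinv⟩ := (T ∘ₗ C.subtype).exists_leftInverse_of_injective hinj
  let L : (Fin r → ℝ) →ₗ[ℝ] Pt d := C.subtype ∘ₗ Linv
  have hLT : ∀ x : Pt d, L (T x) = x - (π x : Pt d) := by
    intro x
    have h1 : T x = T (x - (π x : Pt d)) := by
      rw [map_sub]
      have : T (π x : Pt d) = 0 := hπmem x
      rw [this, sub_zero]
    rw [h1]
    have h4 : Linv (T (x - (π x : Pt d))) = ⟨x - (π x : Pt d), hsub x⟩ := by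
      have h5 := congrArg (fun (F : C →ₗ[ℝ] C) => F ⟨x - (π x : Pt d), hsub x⟩) hLinv
      simpa [LinearMap.comp_apply] using h5
    show C.subtype (Linv (T (x - (π x : Pt d)))) = _
    rw [h4]; rfl
  have hK₀ker : ∀ x : Pt d, x ∈ K₀ → KerAt K p x := by
    intro x hx
    refine hker x fun i => ?_
    have : T x = 0 := hx
    exact congrFun this i
  -- expansion of T x in singles
  have hTx : ∀ x : Pt d, T x = ∑ i, (g i p x) • (Pi.single i 1 : Fin r → ℝ) := by
    intro x
    funext j
    rw [Finset.sum_apply]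
    rw [Finset.sum_eq_single j]
    · simp [T]
    · intro i _ hij
      simp [Pi.single_apply, hij.symm]
    · intro h; exact absurd (Finset.mem_univ j) h
  have hLTx : ∀ x : Pt d, L (T x) = ∑ i, (g i p x) • L ((Pi.single i 1 : Fin r → ℝ)) := by
    intro x; rw [hTx, map_sum]; simp_rw [map_smul]
  -- sum expansions of β
  have hzero2 : ∀ v, β v 0 = 0 := by
    intro v
    have := hsmul2 0 v 0
    simpa using this
  have hzero1 : ∀ w, β 0 w = 0 := by
    intro w; rw [hanti]; simp [hzero2]
  have hsum1 : ∀ (c : Fin r → ℝ) (u : Fin r → Pt d) (w : Pt d),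
      β (∑ i, c i • u i) w = ∑ i, c i * β (u i) w := by
    intro c u w
    induction (Finset.univ : Finset (Fin r)) using Finset.induction_on with
    | empty => simpa using hzero1 w
    | insert _ _ hx ih => rw [Finset.sum_insert hx, Finset.sum_insert hx, hadd, hsmul, ih]
  have hsum2 : ∀ (v : Pt d) (c : Fin r → ℝ) (u : Fin r → Pt d),
      β v (∑ i, c i • u i) = ∑ i, c i * β v (u i) := by
    intro v c u
    induction (Finset.univ : Finset (Fin r)) using Finset.induction_on with
    | empty => simpa using hzero2 v
    | insert _ _ hx ih => rw [Finset.sum_insert hx, Finset.sum_insert hx, hadd2, hsmul2, ih]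
  -- the lambda functions
  refine ⟨r, g, fun i v => (1/2) * (β (π v : Pt d) (L ((Pi.single i 1 : Fin r → ℝ))) - β (L ((Pi.single i 1 : Fin r → ℝ))) v),
    hgK, ?_⟩
  intro v w
  have hππ : ∀ x y : Pt d, β (π x : Pt d) (π y : Pt d) = 0 :=
    fun x y => h0 _ _ (hK₀ker _ (hπmem x)) (hK₀ker _ (hπmem y))
  have key : ∀ x y : Pt d, β x y = β (L (T x)) y + β (π x : Pt d) (L (T y)) := by
    intro x y
    have hx : x = (π x : Pt d) + L (T x) := by rw [hLT]; ring
    calc β x y = β ((π x : Pt d) + L (T x)) y := by rw [← hx]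
      _ = β (π x : Pt d) y + β (L (T x)) y := hadd _ _ _
      _ = β (π x : Pt d) ((π y : Pt d) + L (T y)) + β (L (T x)) y := by
          congr 1
          congr 1
          rw [hLT]; ring
      _ = β (π x : Pt d) (π y : Pt d) + β (π x : Pt d) (L (T y)) + β (L (T x)) y := by
          rw [hadd2]
      _ = β (L (T x)) y + β (π x : Pt d) (L (T y)) := by rw [hππ]; ring
  have expand : ∀ x y : Pt d,
      β x y = ∑ i, (g i p x * β (L ((Pi.single i 1 : Fin r → ℝ))) y + g i p y * β (π x : Pt d) (L ((Pi.single i 1 : Fin r → ℝ)))) := by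
    intro x y
    rw [key x y, hLTx x, hLTx y, hsum1, hsum2, ← Finset.sum_add_distrib]
  have e1 := expand v w
  have e2 := expand w v
  have e3 : β v w = - β w v := hanti v w
  rw [e2] at e3
  have : β v w = (1/2) * (β v w + β v w) := by ring
  rw [this]
  nth_rewrite 1 [e1]
  nth_rewrite 1 [e3]
  rw [← Finset.sum_neg_distrib, ← Finset.sum_add_distrib, Finset.mul_sum]
  refine Finset.sum_congr rfl fun i _ => ?_
  ring

end Criterion
end Aux
namespace Aux
open Module Submodule

section Helpers

lemma fderiv_comp_affine {a b : ℕ} (F : Pt a → ℝ) (A : Pt b →L[ℝ] Pt a) (c : Pt a) (x : Pt b)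
    (hF : DifferentiableAt ℝ F (A x + c)) :
    fderiv ℝ (fun y => F (A y + c)) x = (fderiv ℝ F (A x + c)).comp A := by
  have h1 : DifferentiableAt ℝ (fun y : Pt b => A y + c) x :=
    ((A.differentiable).add_const c).differentiableAt
  have h0 : fderiv ℝ (F ∘ fun y : Pt b => A y + c) x
      = (fderiv ℝ F (A x + c)).comp (fderiv ℝ (fun y : Pt b => A y + c) x) :=
    fderiv_comp (𝕜 := ℝ) (x := x) hF h1
  have h2 : fderiv ℝ (fun y : Pt b => A y + c) x = A := by
    rw [fderiv_add_const]; exact A.fderiv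
  rw [h2] at h0
  exact h0
lemma hasDerivAt_line {a : ℕ} (F : Pt a → ℝ) (p z : Pt a) (hF : DifferentiableAt ℝ F p) :
    HasDerivAt (fun s : ℝ => F (p + s • z)) (fderiv ℝ F p z) 0 := by
  have hline : HasDerivAt (fun s : ℝ => p + s • z) z 0 := by
    simpa using ((hasDerivAt_id (0:ℝ)).smul_const z).const_add p
  have hF' : HasFDerivAt F (fderiv ℝ F p) ((fun s : ℝ => p + s • z) 0) := by
    simpa using hF.hasFDerivAt
  exact hF'.comp_hasDerivAt 0 hline

lemma fderiv_dir_zero {a : ℕ} (F : Pt a → ℝ) (p z : Pt a) (hF : DifferentiableAt ℝ F p)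
    (h0 : ∀ s : ℝ, F (p + s • z) = 0) : fderiv ℝ F p z = 0 := by
  have h1 := hasDerivAt_line F p z hF
  have h2 : (fun s : ℝ => F (p + s • z)) = fun _ => 0 := funext h0
  have h3 := h1.deriv
  rw [h2] at h3
  simp at h3
  exact h3.symm

lemma neg_mul_trick {G H : ℝ → ℝ} (hH : DifferentiableAt ℝ H 0) (hG : HasDerivAt G 0 0)
    (heq : ∀ s, G s = -(s * H s)) : H 0 = 0 := by
  have h1 : HasDerivAt (fun s => -(s * H s)) (-(1 * H 0 + 0 * deriv H 0)) 0 :=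
    (((hasDerivAt_id (0:ℝ)).mul hH.hasDerivAt).neg)
  have h2 : G = fun s => -(s * H s) := funext heq
  rw [h2] at hG
  have := h1.unique hG
  simpa using this.symm

lemma flag_diff {d : ℕ} {K : Set (Form1 d)} {k : ℕ} {ω : Form1 d} (h : ω ∈ flag K k) :
    ∀ w, Differentiable ℝ fun p => ω p w := by
  cases k with
  | zero => exact h.1
  | succ k => exact h.1.1

lemma flag_succ_val {d : ℕ} {K : Set (Form1 d)} {k : ℕ} {ω : Form1 d}
    (h : ω ∈ flag K (k+1)) (p : Pt d) : ω p ∈ spanAt (flag K k) p := h.1.2 p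

lemma flag_succ_derived {d : ℕ} {K : Set (Form1 d)} {k : ℕ} {ω : Form1 d}
    (h : ω ∈ flag K (k+1)) (p : Pt d) : InIdeal2At (flag K k) p (extDeriv1 ω p) := h.2 p

lemma flag_zero_val {d : ℕ} {K : Set (Form1 d)} {ω : Form1 d}
    (h : ω ∈ flag K 0) (p : Pt d) : ω p ∈ spanAt K p := h.2 p

lemma mem_spanAt_self {d : ℕ} {S : Set (Form1 d)} {θ : Form1 d} (h : θ ∈ S) (p : Pt d) :
    θ p ∈ spanAt S p := Submodule.subset_span ⟨θ, h, rfl⟩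

lemma spanAt_le_of_val {d : ℕ} {S : Set (Form1 d)} {p : Pt d}
    {W : Submodule ℝ (Pt d →L[ℝ] ℝ)} (h : ∀ σ ∈ S, σ p ∈ W) : spanAt S p ≤ W := by
  rw [spanAt, Submodule.span_le]
  rintro _ ⟨σ, hσ, rfl⟩
  exact h σ hσ

end Helpers

section Proj
variable (n m : ℕ)

def pr : Pt (n+m+1+m) →L[ℝ] Pt (n+m+1) := projCLM (n+m+1) m

def lft : Pt (n+m+1) →L[ℝ] Pt (n+m+1+m) :=
  ContinuousLinearMap.pi fun j : Fin (n+m+1+m) =>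
    if h : (j : ℕ) < n+m+1 then (ContinuousLinearMap.proj ⟨(j:ℕ), h⟩ : Pt (n+m+1) →L[ℝ] ℝ) else 0

def vert (α : Fin m) : Pt (n+m+1+m) := Pi.single (Fin.natAdd (n+m+1) α) 1

def emb (lam0 : Fin m → ℝ) (x : Pt (n+m+1)) : Pt (n+m+1+m) :=
  fun j => if h : (j : ℕ) < n+m+1 then x ⟨(j:ℕ), h⟩
    else lam0 ⟨(j:ℕ) - (n+m+1), by have := j.isLt; omega⟩

def Gen (α : Fin m) : Form1 (n+m+1+m) := fun p : Pt (n + m + 1 + m) =>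
  pbForm (m := m) (dcoord (uIdx n m α)) p -
    p (Fin.natAdd (n + m + 1) α) • pbForm (m := m) (dcoord (tIdx n m)) p

def pbL : (Pt (n+m+1) →L[ℝ] ℝ) →ₗ[ℝ] (Pt (n+m+1+m) →L[ℝ] ℝ) where
  toFun := fun φ => φ.comp (pr n m)
  map_add' := by intro x y; ext v; simp
  map_smul' := by intro c x; ext v; simp

variable {n m}

lemma pr_apply (p : Pt (n+m+1+m)) (i : Fin (n+m+1)) : pr n m p i = p (Fin.castAdd m i) := rfl

lemma lft_apply (v : Pt (n+m+1)) (j : Fin (n+m+1+m)) :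
    lft n m v j = if h : (j : ℕ) < n+m+1 then v ⟨(j:ℕ), h⟩ else 0 := by
  simp [lft, ContinuousLinearMap.pi_apply]
  split <;> simp

lemma pr_lft (v : Pt (n+m+1)) : pr n m (lft n m v) = v := by
  funext i
  rw [pr_apply, lft_apply]
  rw [dif_pos (by simp; omega)]
  congr 1

lemma pr_vert (α : Fin m) : pr n m (vert n m α) = 0 := by
  funext i
  simp only [pr_apply, vert, Pi.zero_apply]
  rw [Pi.single_apply, if_neg (by simp [Fin.ext_iff]; omega)]

lemma vert_natAdd (α β : Fin m) :
    vert n m α (Fin.natAdd (n+m+1) β) = if β = α then 1 else 0 := by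
  simp only [vert]
  rw [Pi.single_apply]
  simp [Fin.ext_iff]

lemma pb_apply (θ : Form1 (n+m+1)) (q v : Pt (n+m+1+m)) :
    pbForm (m := m) θ q v = θ (pr n m q) (pr n m v) := rfl

lemma pb_dcoord (i : Fin (n+m+1)) (q v : Pt (n+m+1+m)) :
    pbForm (m := m) (dcoord i) q v = v (Fin.castAdd m i) := by
  rw [pb_apply, dcoord_apply]; rfl

lemma Gen_apply (α : Fin m) (q v : Pt (n+m+1+m)) :
    Gen n m α q v = v (Fin.castAdd m (uIdx n m α)) -
      q (Fin.natAdd (n+m+1) α) * v (Fin.castAdd m (tIdx n m)) := by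
  simp [Gen, ContinuousLinearMap.sub_apply, ContinuousLinearMap.smul_apply, smul_eq_mul,
    pb_dcoord]

lemma pr_emb (lam0 : Fin m → ℝ) (x : Pt (n+m+1)) : pr n m (emb n m lam0 x) = x := by
  funext i
  rw [pr_apply]
  show emb n m lam0 x (Fin.castAdd m i) = x i
  rw [emb, dif_pos (by simp; omega)]
  congr 1

lemma emb_natAdd (lam0 : Fin m → ℝ) (x : Pt (n+m+1)) (α : Fin m) :
    emb n m lam0 x (Fin.natAdd (n+m+1) α) = lam0 α := by
  rw [emb, dif_neg (by simp; omega)]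
  congr 1
  exact Fin.ext (by simp)

lemma emb_eq (lam0 : Fin m → ℝ) (x : Pt (n+m+1)) :
    emb n m lam0 x = lft n m x + emb n m lam0 0 := by
  funext j
  rw [Pi.add_apply, lft_apply, emb, emb]
  split <;> simp

lemma emb_pr_vp (p : Pt (n+m+1+m)) :
    emb n m (fun α => p (Fin.natAdd (n+m+1) α)) (pr n m p) = p := by
  funext j
  rw [emb]
  split
  · next h =>
      rw [pr_apply]
      congr 1
  · next h =>
      congr 1
      exact Fin.ext (by simp; omega)

lemma pbL_apply (φ : Pt (n+m+1) →L[ℝ] ℝ) : pbL n m φ = φ.comp (pr n m) := rfl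

end Proj
end Aux
namespace Aux
section Proj2
variable {n m : ℕ}

lemma lft_castAdd (v : Pt (n+m+1)) (i : Fin (n+m+1)) :
    lft n m v (Fin.castAdd m i) = v i := congrFun (pr_lft v) i

lemma line_diff {a : ℕ} (p z : Pt a) : Differentiable ℝ (fun s : ℝ => p + s • z) := by
  apply Differentiable.const_add
  exact (differentiable_id.smul_const z)

end Proj2
end Aux
namespace Aux
open Module Submodule

section SysFacts
variable {n m : ℕ} {If : Set (Form1 (n+m+1))}

lemma totalProl_eq : totalProl n m If =
    ((fun ω => pbForm (m := m) ω) '' If) ∪ Set.range (Gen n m) := rfl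

lemma sep (hspan : ∀ p, spanAt If p ⊔ Submodule.span ℝ
      (Set.range (fun α : Fin m => dcoord (uIdx n m α) p) ∪ {dcoord (tIdx n m) p}) = ⊤)
    (p v : Pt (n+m+1))
    (h1 : ∀ φ ∈ spanAt If p, φ v = 0)
    (h2 : ∀ α, v (uIdx n m α) = 0) (h3 : v (tIdx n m) = 0) : v = 0 := by
  have hall : ∀ ψ : Pt (n+m+1) →L[ℝ] ℝ, ψ v = 0 := by
    intro ψ
    have hmem : ψ ∈ spanAt If p ⊔ Submodule.span ℝ
        (Set.range (fun α : Fin m => dcoord (uIdx n m α) p) ∪ {dcoord (tIdx n m) p}) := by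
      rw [hspan p]; trivial
    have hgen : ∀ χ ∈ Submodule.span ℝ
        (Set.range (fun α : Fin m => dcoord (uIdx n m α) p) ∪ {dcoord (tIdx n m) p}),
        χ v = 0 := by
      intro χ hχ
      induction hχ using Submodule.span_induction with
      | mem x hx =>
          rcases hx with ⟨α, rfl⟩ | hx
          · rw [dcoord_apply]; exact h2 α
          · rw [Set.mem_singleton_iff.mp hx, dcoord_apply]; exact h3
      | zero => simp
      | add x y hx hy ihx ihy => simp [ihx, ihy]
      | smul a x hx ih => simp [ih]
    obtain ⟨φ, hφ, χ, hχ, rfl⟩ := Submodule.mem_sup.mp hmem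
    simp [h1 φ hφ, hgen χ hχ]
  funext j
  exact hall (ContinuousLinearMap.proj j)

lemma exists_dual
    (hrank : ∀ p, Module.finrank ℝ (spanAt If p) = n)
    (hspan : ∀ p, spanAt If p ⊔ Submodule.span ℝ
      (Set.range (fun α : Fin m => dcoord (uIdx n m α) p) ∪ {dcoord (tIdx n m) p}) = ⊤)
    (p : Pt (n+m+1)) (c : Fin m → ℝ) (c' : ℝ) :
    ∃ v : Pt (n+m+1), (∀ φ ∈ spanAt If p, φ v = 0) ∧
      (∀ α, v (uIdx n m α) = c α) ∧ v (tIdx n m) = c' := by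
  classical
  set W := spanAt If p with hW
  haveI : Module.Free ℝ W := Module.Free.of_divisionRing ℝ W
  let b : Basis (Fin n) ℝ W := Module.finBasisOfFinrankEq ℝ W (hrank p)
  let B : Pt (n+m+1) →ₗ[ℝ] (Fin n → ℝ) :=
    LinearMap.pi fun i => ((b i : Pt (n+m+1) →L[ℝ] ℝ)).toLinearMap
  have hchar : ∀ v ∈ LinearMap.ker B, ∀ φ ∈ W, φ v = 0 := by
    intro v hv φ hφ
    have hrepr := Basis.sum_repr b ⟨φ, hφ⟩
    have hφeq : φ = ∑ i, b.repr ⟨φ, hφ⟩ i • ((b i : Pt (n+m+1) →L[ℝ] ℝ)) := by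
      have h := congrArg (Subtype.val) hrepr
      rw [Submodule.coe_sum] at h
      simp only [Submodule.coe_smul] at h
      exact h.symm
    have hBv : ∀ i, ((b i : Pt (n+m+1) →L[ℝ] ℝ)) v = 0 :=
      fun i => congrFun (LinearMap.mem_ker.mp hv) i
    rw [hφeq]
    simp [ContinuousLinearMap.sum_apply, hBv]
  let Ψ : Pt (n+m+1) →ₗ[ℝ] ((Fin m → ℝ) × ℝ) :=
    LinearMap.prod (LinearMap.pi fun α => LinearMap.proj (uIdx n m α))
      (LinearMap.proj (tIdx n m))
  have hinj : Function.Injective (Ψ ∘ₗ (LinearMap.ker B).subtype) := by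
    rw [← LinearMap.ker_eq_bot, LinearMap.ker_eq_bot']
    rintro ⟨v, hv⟩ h
    have hΨ : Ψ v = 0 := h
    apply Subtype.ext
    show v = 0
    apply sep hspan p v (hchar v hv)
    · intro α; exact congrFun (congrArg Prod.fst hΨ) α
    · exact congrArg Prod.snd hΨ
  have hdom : finrank ℝ (Pt (n+m+1)) = n+m+1 := by
    simp [Module.finrank_pi]
  have htarg : finrank ℝ ((Fin m → ℝ) × ℝ) = m + 1 := by
    simp [Module.finrank_prod, Module.finrank_pi]
  have hker_ge : m + 1 ≤ finrank ℝ (LinearMap.ker B) := by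
    have h1 := LinearMap.finrank_range_add_finrank_ker B
    have h3 : finrank ℝ (LinearMap.range B) ≤ n :=
      le_trans (Submodule.finrank_le _) (by simp [Module.finrank_pi])
    rw [hdom] at h1
    omega
  have hker_le : finrank ℝ (LinearMap.ker B) ≤ m + 1 := by
    have h := LinearMap.finrank_le_finrank_of_injective hinj
    rwa [htarg] at h
  have heq : finrank ℝ (LinearMap.ker B) = finrank ℝ ((Fin m → ℝ) × ℝ) := by
    rw [htarg]; omega
  have hsurj : Function.Surjective (Ψ ∘ₗ (LinearMap.ker B).subtype) :=
    (LinearMap.injective_iff_surjective_of_finrank_eq_finrank heq).mp hinj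
  obtain ⟨⟨v, hv⟩, hveq⟩ := hsurj (c, c')
  refine ⟨v, hchar v hv, ?_, ?_⟩
  · intro α; exact congrFun (congrArg Prod.fst hveq) α
  · exact congrArg Prod.snd hveq

lemma P_diff (hsm : ∀ ω ∈ If, ∀ w, Differentiable ℝ fun p => ω p w) :
    ∀ σ ∈ totalProl n m If, ∀ w, Differentiable ℝ fun q => σ q w := by
  rw [totalProl_eq]
  rintro σ (⟨θ, hθ, rfl⟩ | ⟨α, rfl⟩) w
  · show Differentiable ℝ fun q => θ (pr n m q) (pr n m w)
    exact (hsm θ hθ (pr n m w)).comp ((pr n m).differentiable)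
  · have h1 : (fun q => Gen n m α q w) = fun q : Pt (n+m+1+m) =>
        w (Fin.castAdd m (uIdx n m α)) -
          q (Fin.natAdd (n+m+1) α) * w (Fin.castAdd m (tIdx n m)) :=
      funext fun q => Gen_apply α q w
    show Differentiable ℝ fun q => Gen n m α q w
    rw [h1]
    apply (differentiable_const _).sub
    apply Differentiable.mul_const
    exact (ContinuousLinearMap.proj (Fin.natAdd (n+m+1) α) :
      Pt (n+m+1+m) →L[ℝ] ℝ).differentiable

lemma P_sub_sections (hsm : ∀ ω ∈ If, ∀ w, Differentiable ℝ fun p => ω p w) :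
    totalProl n m If ⊆ sectionsOf (totalProl n m If) :=
  fun σ hσ => ⟨P_diff hsm σ hσ, fun p => mem_spanAt_self hσ p⟩

lemma spanP_kill_vert {q : Pt (n+m+1+m)} {ψ : Pt (n+m+1+m) →L[ℝ] ℝ}
    (hψ : ψ ∈ spanAt (totalProl n m If) q)
    {z : Pt (n+m+1+m)} (hz : pr n m z = 0) : ψ z = 0 := by
  have hz' : ∀ i, z (Fin.castAdd m i) = 0 := fun i => congrFun hz i
  induction hψ using Submodule.span_induction with
  | mem x hx =>
      obtain ⟨σ, hσ, rfl⟩ := hx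
      rw [totalProl_eq] at hσ
      rcases hσ with ⟨θ, hθ, rfl⟩ | ⟨α, rfl⟩
      · rw [pb_apply, hz, map_zero]
      · show Gen n m α q z = 0
        rw [Gen_apply, hz', hz']; ring
  | zero => simp
  | add x y hx hy ihx ihy => simp [ihx, ihy]
  | smul a x hx ih => simp [ih]

lemma spanP_decomp {p : Pt (n+m+1+m)} {ψ : Pt (n+m+1+m) →L[ℝ] ℝ}
    (hψ : ψ ∈ spanAt (totalProl n m If) p) :
    ∃ φ ∈ spanAt If (pr n m p), ∃ b : Fin m → ℝ,
      ψ = pbL n m φ + ∑ α, b α • Gen n m α p := by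
  have himg : ((fun σ : Form1 (n+m+1+m) => σ p) '' (totalProl n m If)) =
      ((pbL n m) '' ((fun θ : Form1 (n+m+1) => θ (pr n m p)) '' If)) ∪
        Set.range (fun α => Gen n m α p) := by
    have h2 : ((fun σ : Form1 (n+m+1+m) => σ p) '' Set.range (Gen n m)) =
        Set.range (fun α => Gen n m α p) := by
      rw [← Set.range_comp]; rfl
    have h3 : (fun θ : Form1 (n+m+1) => pbForm (m := m) θ p) =
        (fun θ : Form1 (n+m+1) => pbL n m (θ (pr n m p))) := funext fun θ => rfl
    rw [totalProl_eq, Set.image_union, Set.image_image, h2, h3, ← Set.image_image]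
  rw [spanAt, himg, Submodule.span_union] at hψ
  obtain ⟨ψ1, h1, ψ2, h2, rfl⟩ := Submodule.mem_sup.mp hψ
  rw [Submodule.span_image] at h1
  obtain ⟨φ, hφ, rfl⟩ := h1
  rw [mem_span_range_iff_exists_fun] at h2
  obtain ⟨b, hb⟩ := h2
  exact ⟨φ, hφ, b, by rw [← hb]⟩

end SysFacts
end Aux
namespace Aux
open Module Submodule

section A0
variable {n m : ℕ} {If : Set (Form1 (n+m+1))}

lemma spanAt_sections_le {d : ℕ} (K : Set (Form1 d)) (q : Pt d) :
    spanAt (sectionsOf K) q ≤ spanAt K q :=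
  spanAt_le_of_val (fun _ hσ => hσ.2 q)

lemma stepA0
    (hrank : ∀ p, Module.finrank ℝ (spanAt If p) = n)
    (hspan : ∀ p, spanAt If p ⊔ Submodule.span ℝ
      (Set.range (fun α : Fin m => dcoord (uIdx n m α) p) ∪ {dcoord (tIdx n m) p}) = ⊤) :
    ∀ ω ∈ flag (totalProl n m If) 1, ∀ p : Pt (n+m+1+m),
      ∃ φ ∈ spanAt If (pr n m p), ω p = pbL n m φ := by
  intro ω hω p
  have hsect : ∀ q, ω q ∈ spanAt (totalProl n m If) q := by
    intro q
    exact spanAt_le_of_val (fun σ (hσ : σ ∈ sectionsOf (totalProl n m If)) => hσ.2 q)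
      (flag_succ_val hω q)
  have hdiffω := flag_diff hω
  obtain ⟨v0, hv0span, hv0u, hv0t⟩ :=
    exists_dual hrank hspan (pr n m p) (fun β => p (Fin.natAdd (n+m+1) β)) 1
  obtain ⟨φ, hφ, b, hb⟩ := spanP_decomp (hsect p)
  have hb0 : ∀ α, b α = 0 := by
    intro α
    obtain ⟨w, hw1, hw2, hw3⟩ := exists_dual hrank hspan (pr n m p) (Pi.single α 1) 0
    have hprq : ∀ s : ℝ, pr n m (p + s • vert n m α) = pr n m p := by
      intro s; rw [map_add, map_smul, pr_vert]; simp
    -- the key pointwise identity on the vertical line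
    have hid : ∀ s : ℝ, ∀ ψ ∈ spanAt (totalProl n m If) (p + s • vert n m α),
        ψ (lft n m v0) + s * ψ (lft n m w) = 0 := by
      intro s ψ hψ
      obtain ⟨φ', hφ', b', rfl⟩ := spanP_decomp hψ
      rw [hprq s] at hφ'
      have e1 : pbL n m φ' (lft n m v0) = 0 := by
        rw [pbL_apply]
        show φ' (pr n m (lft n m v0)) = 0
        rw [pr_lft]; exact hv0span φ' hφ'
      have e2 : pbL n m φ' (lft n m w) = 0 := by
        rw [pbL_apply]
        show φ' (pr n m (lft n m w)) = 0
        rw [pr_lft]; exact hw1 φ' hφ'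
      have e3 : ∀ β, Gen n m β (p + s • vert n m α) (lft n m v0) =
          -(s * (if β = α then 1 else 0)) := by
        intro β
        rw [Gen_apply, lft_castAdd, lft_castAdd, hv0u, hv0t]
        have : (p + s • vert n m α) (Fin.natAdd (n+m+1) β) =
            p (Fin.natAdd (n+m+1) β) + s * (if β = α then 1 else 0) := by
          rw [Pi.add_apply, Pi.smul_apply, vert_natAdd, smul_eq_mul]
        rw [this]; ring
      have e4 : ∀ β, Gen n m β (p + s • vert n m α) (lft n m w) =
          (if β = α then 1 else 0) := by
        intro β
        rw [Gen_apply, lft_castAdd, lft_castAdd, hw2, hw3, Pi.single_apply]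
        ring
      rw [ContinuousLinearMap.add_apply, ContinuousLinearMap.add_apply,
        ContinuousLinearMap.sum_apply, ContinuousLinearMap.sum_apply, e1, e2]
      simp only [ContinuousLinearMap.smul_apply, smul_eq_mul, e3, e4]
      simp only [zero_add]
      rw [Finset.mul_sum, ← Finset.sum_add_distrib]
      apply Finset.sum_eq_zero
      intro β _
      ring
    -- translate to functions of s
    have hG : ∀ s : ℝ, ω (p + s • vert n m α) (lft n m v0) =
        -(s * ω (p + s • vert n m α) (lft n m w)) := by
      intro s
      have := hid s _ (hsect _)
      linarith
    have hω_vert_zero : (fun q => ω q (vert n m α)) = fun _ => (0:ℝ) :=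
      funext fun q => spanP_kill_vert (hsect q) (pr_vert α)
    have hkerv : KerAt (flag (totalProl n m If) 0) p (vert n m α) := by
      intro σ hσ
      exact spanP_kill_vert (spanAt_le_of_val
        (fun σ' (hσ' : σ' ∈ sectionsOf (totalProl n m If)) => hσ'.2 p)
        (mem_spanAt_self hσ p)) (pr_vert α)
    have hkerv0 : KerAt (flag (totalProl n m If) 0) p (lft n m v0) := by
      intro σ hσ
      have hmem : σ p ∈ spanAt (totalProl n m If) p :=
        spanAt_le_of_val (fun σ' (hσ' : σ' ∈ sectionsOf (totalProl n m If)) => hσ'.2 p)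
          (mem_spanAt_self hσ p)
      have := hid 0 _ (by simpa using hmem)
      simpa using this
    have hEd : extDeriv1 ω p (vert n m α) (lft n m v0) = 0 :=
      ideal_eval_zero (flag_succ_derived hω p) hkerv hkerv0
    have hG0 : HasDerivAt (fun s : ℝ => ω (p + s • vert n m α) (lft n m v0)) 0 0 := by
      have h1 := hasDerivAt_line (fun q => ω q (lft n m v0)) p (vert n m α)
        ((hdiffω _).differentiableAt)
      have h3 : fderiv ℝ (fun q => ω q (vert n m α)) p (lft n m v0) = 0 := by
        rw [hω_vert_zero]; simp
      have h4 : extDeriv1 ω p (vert n m α) (lft n m v0) =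
          fderiv ℝ (fun q => ω q (lft n m v0)) p (vert n m α) -
            fderiv ℝ (fun q => ω q (vert n m α)) p (lft n m v0) := rfl
      have h2 : fderiv ℝ (fun q => ω q (lft n m v0)) p (vert n m α) = 0 := by
        have h5 := hEd
        rw [h4, h3, sub_zero] at h5
        exact h5
      rw [h2] at h1
      exact h1
    have hH : DifferentiableAt ℝ (fun s : ℝ => ω (p + s • vert n m α) (lft n m w)) 0 :=
      ((hdiffω (lft n m w)).comp (line_diff p (vert n m α))).differentiableAt
    have hw0 : ω p (lft n m w) = 0 := by
      have := neg_mul_trick hH hG0 hG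
      simpa using this
    -- compute b α
    have hbα : ω p (lft n m w) = b α := by
      rw [hb]
      rw [ContinuousLinearMap.add_apply, ContinuousLinearMap.sum_apply]
      have e1 : pbL n m φ (lft n m w) = 0 := by
        rw [pbL_apply]
        show φ (pr n m (lft n m w)) = 0
        rw [pr_lft]; exact hw1 φ hφ
      have e4 : ∀ β, Gen n m β p (lft n m w) = (if β = α then 1 else 0) := by
        intro β
        rw [Gen_apply, lft_castAdd, lft_castAdd, hw2, hw3, Pi.single_apply]
        ring
      rw [e1]
      simp only [ContinuousLinearMap.smul_apply, smul_eq_mul, e4]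
      simp [Finset.sum_ite_eq']
    rw [← hbα, hw0]
  refine ⟨φ, hφ, ?_⟩
  rw [hb]
  have : ∑ α, b α • Gen n m α p = 0 := by
    apply Finset.sum_eq_zero
    intro α _
    rw [hb0 α, zero_smul]
  rw [this, add_zero]

end A0
end Aux
namespace Aux
open Module Submodule

section Chain
variable {n m : ℕ} {If : Set (Form1 (n+m+1))}

def res (ω : Form1 (n+m+1+m)) (lam0 : Fin m → ℝ) : Form1 (n+m+1) :=
  fun x => (ω (emb n m lam0 x)).comp (lft n m)

lemma res_eq (ω : Form1 (n+m+1+m)) (lam0 : Fin m → ℝ) (x : Pt (n+m+1)) :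
    res ω lam0 x = (ω (emb n m lam0 x)).comp (lft n m) := rfl

lemma res_apply (ω : Form1 (n+m+1+m)) (lam0 : Fin m → ℝ) (x : Pt (n+m+1)) (v : Pt (n+m+1)) :
    res ω lam0 x v = ω (emb n m lam0 x) (lft n m v) := rfl

lemma pbL_comp_lft (φ : Pt (n+m+1) →L[ℝ] ℝ) : (pbL n m φ).comp (lft n m) = φ := by
  ext v
  show φ (pr n m (lft n m v)) = φ v
  rw [pr_lft]

lemma res_of_pbL {ω : Form1 (n+m+1+m)} {lam0 : Fin m → ℝ} {x : Pt (n+m+1)}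
    {φ : Pt (n+m+1) →L[ℝ] ℝ} (h : ω (emb n m lam0 x) = pbL n m φ) :
    res ω lam0 x = φ := by
  rw [res_eq, h, pbL_comp_lft]

lemma res_diff {ω : Form1 (n+m+1+m)} (hdiff : ∀ u, Differentiable ℝ fun q => ω q u)
    (lam0 : Fin m → ℝ) : ∀ v, Differentiable ℝ fun x => res ω lam0 x v := by
  intro v
  have h1 : (fun x => res ω lam0 x v) =
      fun x => (fun q => ω q (lft n m v)) ((lft n m) x + emb n m lam0 0) :=
    funext fun x => by rw [res_apply, ← emb_eq]
  rw [h1]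
  exact (hdiff _).comp (((lft n m).differentiable).add_const _)

lemma fderiv_comp_clm {a b : ℕ} (F : Pt a → ℝ) (A : Pt b →L[ℝ] Pt a) (x : Pt b)
    (hF : DifferentiableAt ℝ F (A x)) :
    fderiv ℝ (fun y => F (A y)) x = (fderiv ℝ F (A x)).comp A := by
  have h := fderiv_comp_affine F A 0 x (by simpa using hF)
  simpa using h

lemma extDeriv_res {ω : Form1 (n+m+1+m)} (hdiff : ∀ u, Differentiable ℝ fun q => ω q u)
    (lam0 : Fin m → ℝ) (x v w : Pt (n+m+1)) :
    extDeriv1 (res ω lam0) x v w = extDeriv1 ω (emb n m lam0 x) (lft n m v) (lft n m w) := by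
  have key : ∀ u v' : Pt (n+m+1), fderiv ℝ (fun x' => res ω lam0 x' u) x v' =
      fderiv ℝ (fun q => ω q (lft n m u)) (emb n m lam0 x) (lft n m v') := by
    intro u v'
    have h1 : (fun x' => res ω lam0 x' u) =
        fun x' => (fun q => ω q (lft n m u)) ((lft n m) x' + emb n m lam0 0) :=
      funext fun x' => by rw [res_apply, ← emb_eq]
    rw [h1, fderiv_comp_affine _ _ _ _ ((hdiff _).differentiableAt), ← emb_eq]
    rfl
  rw [extDeriv1, extDeriv1, key, key]

lemma extDeriv_pb {θ : Form1 (n+m+1)} (hdiff : ∀ u, Differentiable ℝ fun x => θ x u)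
    (q v w : Pt (n+m+1+m)) :
    extDeriv1 (pbForm (m := m) θ) q v w = extDeriv1 θ (pr n m q) (pr n m v) (pr n m w) := by
  have key : ∀ u v' : Pt (n+m+1+m), fderiv ℝ (fun q' => pbForm (m := m) θ q' u) q v' =
      fderiv ℝ (fun x => θ x (pr n m u)) (pr n m q) (pr n m v') := by
    intro u v'
    have h1 : (fun q' => pbForm (m := m) θ q' u) =
        fun q' => (fun x => θ x (pr n m u)) ((pr n m) q') := rfl
    rw [h1, fderiv_comp_clm _ _ _ ((hdiff _).differentiableAt)]
    rfl
  rw [extDeriv1, extDeriv1, key, key]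

lemma extDeriv_dcoord {d : ℕ} (i : Fin d) (p v w : Pt d) :
    extDeriv1 (dcoord i) p v w = 0 := by
  have h1 : ∀ u : Pt d, (fun p' : Pt d => dcoord i p' u) = fun _ => u i :=
    fun u => funext fun p' => dcoord_apply i p' u
  rw [extDeriv1, h1, h1]
  simp

lemma extDeriv_pb_dcoord (i : Fin (n+m+1)) (q v w : Pt (n+m+1+m)) :
    extDeriv1 (pbForm (m := m) (dcoord i)) q v w = 0 := by
  have h1 : ∀ u : Pt (n+m+1+m),
      (fun q' : Pt (n+m+1+m) => pbForm (m := m) (dcoord i) q' u) = fun _ => u (Fin.castAdd m i) :=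
    fun u => funext fun q' => pb_dcoord i q' u
  rw [extDeriv1, h1, h1]
  simp

lemma inIdeal2At_zero {d : ℕ} (K : Set (Form1 d)) (p : Pt d) (β : Pt d → Pt d → ℝ)
    (h : ∀ v w, β v w = 0) : InIdeal2At K p β :=
  ⟨0, Fin.elim0, Fin.elim0, fun i => i.elim0, fun v w => by simp [h]⟩

lemma extDeriv_self {d : ℕ} (ω : Form1 d) (p v : Pt d) : extDeriv1 ω p v v = 0 := by
  have := extDeriv_antisymm ω p v v
  linarith

lemma spanAt_mono {d : ℕ} {K K' : Set (Form1 d)} (h : K ⊆ K') (p : Pt d) :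
    spanAt K p ≤ spanAt K' p := Submodule.span_mono (Set.image_mono h)

lemma If_sub_sections (hsm : ∀ ω ∈ If, ∀ w, Differentiable ℝ fun p => ω p w) :
    If ⊆ sectionsOf If :=
  fun θ hθ => ⟨hsm θ hθ, fun p => mem_spanAt_self hθ p⟩

lemma pbL_mem_span {S : Set (Form1 (n+m+1))} {S' : Set (Form1 (n+m+1+m))}
    (h : ∀ θ ∈ S, pbForm (m := m) θ ∈ S') (q : Pt (n+m+1+m))
    {φ : Pt (n+m+1) →L[ℝ] ℝ} (hφ : φ ∈ spanAt S (pr n m q)) :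
    pbL n m φ ∈ spanAt S' q := by
  induction hφ using Submodule.span_induction with
  | mem x hx =>
      obtain ⟨θ, hθ, rfl⟩ := hx
      exact mem_spanAt_self (h θ hθ) q
  | zero => rw [map_zero]; exact Submodule.zero_mem _
  | add x y hx hy ihx ihy => rw [map_add]; exact Submodule.add_mem _ ihx ihy
  | smul a x hx ih => rw [map_smul]; exact Submodule.smul_mem _ a ih

end Chain
end Aux
namespace Aux
open Module Submodule

section ACR
variable {n m : ℕ} {If : Set (Form1 (n+m+1))}

/-- joint kernel transfer downstairs via C -/
lemma down_ker {k : ℕ} (hC : ∀ θ ∈ flag If k, pbForm (m := m) θ ∈ flag (totalProl n m If) (k+1))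
    {q x : Pt (n+m+1+m)} (hker : KerAt (flag (totalProl n m If) (k+1)) q x) :
    KerAt (flag If k) (pr n m q) (pr n m x) :=
  fun θ hθ => hker _ (hC θ hθ)

/-- values of upstairs flag elements kill anything projecting into the downstairs kernel -/
lemma upA_kill {k : ℕ}
    (hA : ∀ ω ∈ flag (totalProl n m If) (k+1), ∀ p,
      ∃ φ ∈ spanAt (flag If k) (pr n m p), ω p = pbL n m φ)
    {ω : Form1 (n+m+1+m)} (hω : ω ∈ flag (totalProl n m If) (k+1)) (q x : Pt (n+m+1+m))
    (hx : KerAt (flag If k) (pr n m q) (pr n m x)) : ω q x = 0 := by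
  obtain ⟨φ, hφ, heq⟩ := hA ω hω q
  rw [heq]
  show φ (pr n m x) = 0
  exact spanAt_kill hφ hx

theorem ACR (hsm : ∀ ω ∈ If, ∀ w, Differentiable ℝ fun p => ω p w)
    (hrank : ∀ p, Module.finrank ℝ (spanAt If p) = n)
    (hspan : ∀ p, spanAt If p ⊔ Submodule.span ℝ
      (Set.range (fun α : Fin m => dcoord (uIdx n m α) p) ∪ {dcoord (tIdx n m) p}) = ⊤) :
    ∀ k : ℕ,
      (∀ ω ∈ flag (totalProl n m If) (k+1), ∀ p,
        ∃ φ ∈ spanAt (flag If k) (pr n m p), ω p = pbL n m φ) ∧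
      (∀ θ ∈ flag If k, pbForm (m := m) θ ∈ flag (totalProl n m If) (k+1)) ∧
      (∀ ω ∈ flag (totalProl n m If) (k+1), ∀ lam0, res ω lam0 ∈ flag If k) := by
  intro k
  induction k with
  | zero =>
      have hA0 : ∀ ω ∈ flag (totalProl n m If) 1, ∀ p,
          ∃ φ ∈ spanAt (flag If 0) (pr n m p), ω p = pbL n m φ := by
        intro ω hω p
        obtain ⟨φ, hφ, heq⟩ := stepA0 hrank hspan ω hω p
        exact ⟨φ, spanAt_mono (If_sub_sections hsm) _ hφ, heq⟩
      refine ⟨hA0, ?_, ?_⟩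
      · -- C0
        intro θ hθ
        have hθd : ∀ u, Differentiable ℝ fun x => θ x u := hθ.1
        have hpbd : ∀ u, Differentiable ℝ fun q => pbForm (m := m) θ q u := by
          intro u
          show Differentiable ℝ fun q => θ (pr n m q) (pr n m u)
          exact (hθd (pr n m u)).comp ((pr n m).differentiable)
        refine ⟨⟨hpbd, ?_⟩, ?_⟩
        · -- values
          intro q
          have hv : pbForm (m := m) θ q = pbL n m (θ (pr n m q)) := rfl
          rw [hv]
          have h1 : pbL n m (θ (pr n m q)) ∈ spanAt (totalProl n m If) q :=
            pbL_mem_span (fun θ' hθ' => Or.inl ⟨θ', hθ', rfl⟩) q (hθ.2 (pr n m q))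
          exact spanAt_mono (P_sub_sections hsm) q h1
        · -- derived condition
          intro p
          apply inIdeal2At_of_ker _ _ _
            (extDeriv_add_left _ hpbd p) (extDeriv_smul_left _ hpbd p)
            (extDeriv_antisymm _ p)
          intro v w hv hw
          rw [extDeriv_pb hθd]
          -- kernel structure of sectionsOf P
          have hIfker : ∀ x : Pt (n+m+1+m), KerAt (sectionsOf (totalProl n m If)) p x →
              KerAt If (pr n m p) (pr n m x) := by
            intro x hx θ' hθ'
            exact hx _ (P_sub_sections hsm (Or.inl ⟨θ', hθ', rfl⟩))
          have hGenker : ∀ x : Pt (n+m+1+m), KerAt (sectionsOf (totalProl n m If)) p x →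
              ∀ β, (pr n m x) (uIdx n m β) =
                p (Fin.natAdd (n+m+1) β) * (pr n m x) (tIdx n m) := by
            intro x hx β
            have h := hx _ (P_sub_sections hsm (Or.inr ⟨β, rfl⟩))
            have h2 : Gen n m β p x = 0 := h
            rw [Gen_apply] at h2
            have e1 : x (Fin.castAdd m (uIdx n m β)) = (pr n m x) (uIdx n m β) := rfl
            have e2 : x (Fin.castAdd m (tIdx n m)) = (pr n m x) (tIdx n m) := rfl
            rw [e1, e2] at h2
            linarith
          -- 1-dimensionality
          have hkv := hIfker v hv
          have hkw := hIfker w hw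
          have hgv := hGenker v hv
          have hgw := hGenker w hw
          set vb := pr n m v with hvb
          set wb := pr n m w with hwb
          set a := vb (tIdx n m) with ha
          set bb := wb (tIdx n m) with hbb
          have hx0 : bb • vb - a • wb = 0 := by
            apply sep hspan (pr n m p)
            · intro φ hφ
              rw [ContinuousLinearMap.map_sub, ContinuousLinearMap.map_smul,
                ContinuousLinearMap.map_smul]
              have hv' : φ vb = 0 := spanAt_kill hφ hkv
              have hw' : φ wb = 0 := spanAt_kill hφ hkw
              rw [hv', hw']; simp
            · intro β
              rw [Pi.sub_apply, Pi.smul_apply, Pi.smul_apply, hgv β, hgw β]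
              simp [smul_eq_mul]; ring
            · rw [Pi.sub_apply, Pi.smul_apply, Pi.smul_apply, ← ha, ← hbb]
              simp [smul_eq_mul]; ring
          -- conclude
          by_cases hb0 : bb = 0
          · by_cases ha0 : a = 0
            · -- vb = 0
              have hveq : vb = 0 := by
                apply sep hspan (pr n m p)
                · intro φ hφ; exact spanAt_kill hφ hkv
                · intro β
                  rw [hgv β, ha0, mul_zero]
                · exact ha0
              rw [hveq]
              exact extDeriv_zero_left θ (pr n m p) wb
            · have h1 : a • wb = 0 := by
                have h2 := hx0
                rw [hb0, zero_smul, zero_sub] at h2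
                simpa using h2
              have hw0 : wb = 0 := by
                rcases smul_eq_zero.mp h1 with h | h
                · exact absurd h ha0
                · exact h
              rw [hw0, extDeriv_antisymm, extDeriv_zero_left]
              ring
          · have h1 : bb • vb = a • wb := sub_eq_zero.mp hx0
            have h2 : bb * extDeriv1 θ (pr n m p) vb wb = 0 := by
              rw [← extDeriv_smul_left θ hθd _ bb, h1, extDeriv_smul_left θ hθd,
                extDeriv_self, mul_zero]
            exact (mul_eq_zero.mp h2).resolve_left hb0
      · -- R0
        intro ω hω lam0
        have hdiffω := flag_diff hω
        refine ⟨res_diff hdiffω lam0, ?_⟩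
        intro x
        obtain ⟨φ, hφ, heq⟩ := stepA0 hrank hspan ω hω (emb n m lam0 x)
        rw [pr_emb] at hφ
        rw [res_of_pbL heq]
        exact hφ
  | succ k ih =>
      obtain ⟨hA, hC, hR⟩ := ih
      -- R (k+1)
      have hRk : ∀ ω ∈ flag (totalProl n m If) (k+2), ∀ lam0, res ω lam0 ∈ flag If (k+1) := by
        intro ω hω lam0
        have hdiffω := flag_diff hω
        refine ⟨⟨res_diff hdiffω lam0, ?_⟩, ?_⟩
        · -- values
          intro x
          have hval : ω (emb n m lam0 x) ∈ spanAt (flag (totalProl n m If) (k+1)) (emb n m lam0 x) :=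
            flag_succ_val hω _
          have hle : spanAt (flag (totalProl n m If) (k+1)) (emb n m lam0 x) ≤
              Submodule.map (pbL n m) (spanAt (flag If k) (pr n m (emb n m lam0 x))) := by
            apply spanAt_le_of_val
            intro σ hσ
            obtain ⟨φ, hφ, heq⟩ := hA σ hσ (emb n m lam0 x)
            exact ⟨φ, hφ, heq.symm⟩
          obtain ⟨φ, hφ, heq⟩ := hle hval
          rw [res_of_pbL heq.symm]
          rw [pr_emb] at hφ
          exact hφ
        · -- derived
          intro x
          apply inIdeal2At_of_ker _ _ _
            (extDeriv_add_left _ (res_diff hdiffω lam0) x)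
            (extDeriv_smul_left _ (res_diff hdiffω lam0) x)
            (extDeriv_antisymm _ x)
          intro v w hv hw
          rw [extDeriv_res hdiffω]
          apply ideal_eval_zero (flag_succ_derived hω (emb n m lam0 x))
          · intro σ hσ
            apply upA_kill hA hσ
            rw [pr_emb, pr_lft]
            exact hv
          · intro σ hσ
            apply upA_kill hA hσ
            rw [pr_emb, pr_lft]
            exact hw
      -- A (k+1)
      have hAk : ∀ ω ∈ flag (totalProl n m If) (k+2), ∀ p,
          ∃ φ ∈ spanAt (flag If (k+1)) (pr n m p), ω p = pbL n m φ := by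
        intro ω hω p
        set lam0 : Fin m → ℝ := fun α => p (Fin.natAdd (n+m+1) α) with hlam0
        have hembp : emb n m lam0 (pr n m p) = p := emb_pr_vp p
        have hres : res ω lam0 ∈ flag If (k+1) := hRk ω hω lam0
        -- value of ω p via A_k
        have hval : ω p ∈ spanAt (flag (totalProl n m If) (k+1)) p := flag_succ_val hω p
        have hle : spanAt (flag (totalProl n m If) (k+1)) p ≤
            Submodule.map (pbL n m) (spanAt (flag If k) (pr n m p)) := by
          apply spanAt_le_of_val
          intro σ hσ
          obtain ⟨φ, hφ, heq⟩ := hA σ hσ p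
          exact ⟨φ, hφ, heq.symm⟩
        obtain ⟨φ', hφ', heq'⟩ := hle hval
        refine ⟨res ω lam0 (pr n m p), mem_spanAt_self hres (pr n m p), ?_⟩
        have h2 : res ω lam0 (pr n m p) = φ' := by
          apply res_of_pbL
          rw [hembp, heq']
        rw [h2, heq']
      -- C (k+1)
      have hCk : ∀ θ ∈ flag If (k+1), pbForm (m := m) θ ∈ flag (totalProl n m If) (k+2) := by
        intro θ hθ
        have hθd := flag_diff hθ
        have hpbd : ∀ u, Differentiable ℝ fun q => pbForm (m := m) θ q u := by
          intro u
          show Differentiable ℝ fun q => θ (pr n m q) (pr n m u)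
          exact (hθd (pr n m u)).comp ((pr n m).differentiable)
        refine ⟨⟨hpbd, ?_⟩, ?_⟩
        · intro q
          have hv : pbForm (m := m) θ q = pbL n m (θ (pr n m q)) := rfl
          rw [hv]
          exact pbL_mem_span hC q (flag_succ_val hθ (pr n m q))
        · intro q
          apply inIdeal2At_of_ker _ _ _
            (extDeriv_add_left _ hpbd q) (extDeriv_smul_left _ hpbd q)
            (extDeriv_antisymm _ q)
          intro v w hv hw
          rw [extDeriv_pb hθd]
          exact ideal_eval_zero (flag_succ_derived hθ (pr n m q))
            (down_ker hC hv) (down_ker hC hw)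
      exact ⟨hAk, hCk, hRk⟩

end ACR
end Aux
namespace Aux
open Module Submodule

section Assemble
variable {n m : ℕ} {If : Set (Form1 (n+m+1))}

lemma extDeriv_add_right {d : ℕ} (ω : Form1 d)
    (hdiff : ∀ u, Differentiable ℝ fun q => ω q u) (p v w w' : Pt d) :
    extDeriv1 ω p v (w + w') = extDeriv1 ω p v w + extDeriv1 ω p v w' := by
  rw [extDeriv_antisymm ω p v (w+w'), extDeriv_add_left ω hdiff p w w' v,
    extDeriv_antisymm ω p w v, extDeriv_antisymm ω p w' v]
  ring

lemma flag_van_succ {d : ℕ} {K : Set (Form1 d)} {j : ℕ}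
    (h : ∀ ω ∈ flag K j, ∀ p w, ω p w = 0) :
    ∀ ω ∈ flag K (j+1), ∀ p w, ω p w = 0 := by
  intro ω hω p w
  exact spanAt_kill (flag_succ_val hω p) (fun σ hσ => h σ hσ p w)

lemma vert_dir_deriv_zero {k : ℕ}
    (hA : ∀ ω ∈ flag (totalProl n m If) (k+1), ∀ p,
      ∃ φ ∈ spanAt (flag If k) (pr n m p), ω p = pbL n m φ)
    {ω : Form1 (n+m+1+m)} (hω : ω ∈ flag (totalProl n m If) (k+1)) (p z x : Pt (n+m+1+m))
    (hz : pr n m z = 0) (hx : KerAt (flag If k) (pr n m p) (pr n m x)) :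
    fderiv ℝ (fun q => ω q x) p z = 0 := by
  apply fderiv_dir_zero _ _ _ ((flag_diff hω x).differentiableAt)
  intro s
  apply upA_kill hA hω
  have hpq : pr n m (p + s • z) = pr n m p := by
    rw [map_add, map_smul, hz, smul_zero, add_zero]
  rw [hpq]
  exact hx

lemma beta_vert_zero {k : ℕ}
    (hA : ∀ ω ∈ flag (totalProl n m If) (k+1), ∀ p,
      ∃ φ ∈ spanAt (flag If k) (pr n m p), ω p = pbL n m φ)
    {ω : Form1 (n+m+1+m)} (hω : ω ∈ flag (totalProl n m If) (k+1)) (p z x : Pt (n+m+1+m))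
    (hz : pr n m z = 0) (hx : KerAt (flag If k) (pr n m p) (pr n m x)) :
    extDeriv1 ω p z x = 0 := by
  have hωz : (fun q => ω q z) = fun _ => (0:ℝ) := by
    funext q
    apply upA_kill hA hω
    rw [hz]
    exact fun θ hθ => (θ (pr n m q)).map_zero
  rw [extDeriv1, hωz, vert_dir_deriv_zero hA hω p z x hz hx]
  simp

lemma frob_up0
    (hsm : ∀ ω ∈ If, ∀ w, Differentiable ℝ fun p => ω p w)
    (hspan : ∀ p, spanAt If p ⊔ Submodule.span ℝ
      (Set.range (fun α : Fin m => dcoord (uIdx n m α) p) ∪ {dcoord (tIdx n m) p}) = ⊤) :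
    IsFrobenius (flag (totalProl n m If) 0 ∪ {pbForm (m := m) (dcoord (tIdx n m))}) := by
  intro ω hω p
  rcases hω with hω | hτ
  · have hd : ∀ u, Differentiable ℝ fun q => ω q u := hω.1
    apply inIdeal2At_of_ker _ _ _
      (extDeriv_add_left _ hd p) (extDeriv_smul_left _ hd p) (extDeriv_antisymm _ p)
    intro v w hv hw
    have hvert : ∀ x : Pt (n+m+1+m),
        KerAt (flag (totalProl n m If) 0 ∪ {pbForm (m := m) (dcoord (tIdx n m))}) p x →
        pr n m x = 0 := by
      intro x hx
      have ht : (pr n m x) (tIdx n m) = 0 := by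
        have h0 := hx _ (Or.inr rfl)
        rw [pb_dcoord] at h0
        exact h0
      apply sep hspan (pr n m p)
      · intro φ hφ
        refine spanAt_kill hφ ?_
        intro θ' hθ'
        exact hx (pbForm (m := m) θ') (Or.inl (P_sub_sections hsm (Or.inl ⟨θ', hθ', rfl⟩)))
      · intro β
        have hg := hx _ (Or.inl (P_sub_sections hsm (Or.inr ⟨β, rfl⟩)))
        have h2 : Gen n m β p x = 0 := hg
        rw [Gen_apply] at h2
        have e2 : x (Fin.castAdd m (tIdx n m)) = (pr n m x) (tIdx n m) := rfl
        rw [e2, ht, mul_zero, sub_zero] at h2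
        exact h2
      · exact ht
    have hzv := hvert v hv
    have hzw := hvert w hw
    have h1 : (fun q => ω q v) = fun _ => (0:ℝ) :=
      funext fun q => spanP_kill_vert (hω.2 q) hzv
    have h2 : (fun q => ω q w) = fun _ => (0:ℝ) :=
      funext fun q => spanP_kill_vert (hω.2 q) hzw
    rw [extDeriv1, h1, h2]
    simp
  · rw [Set.mem_singleton_iff] at hτ
    subst hτ
    exact inIdeal2At_zero _ _ _ (extDeriv_pb_dcoord (tIdx n m) p)

lemma frob_up
    (hsm : ∀ ω ∈ If, ∀ w, Differentiable ℝ fun p => ω p w)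
    (hrank : ∀ p, Module.finrank ℝ (spanAt If p) = n)
    (hspan : ∀ p, spanAt If p ⊔ Submodule.span ℝ
      (Set.range (fun α : Fin m => dcoord (uIdx n m α) p) ∪ {dcoord (tIdx n m) p}) = ⊤)
    (k : ℕ) (hfrobk : IsFrobenius (flag If k ∪ {dcoord (tIdx n m)})) :
    IsFrobenius (flag (totalProl n m If) (k+1) ∪ {pbForm (m := m) (dcoord (tIdx n m))}) := by
  obtain ⟨hA, hC, hR⟩ := ACR hsm hrank hspan k
  intro ω hω p
  rcases hω with hω | hτ
  swap
  · rw [Set.mem_singleton_iff] at hτ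
    subst hτ
    exact inIdeal2At_zero _ _ _ (extDeriv_pb_dcoord (tIdx n m) p)
  have hd := flag_diff hω
  apply inIdeal2At_of_ker _ _ _
    (extDeriv_add_left _ hd p) (extDeriv_smul_left _ hd p) (extDeriv_antisymm _ p)
  intro v w hv hw
  -- downstairs kernels
  have hkd : ∀ x : Pt (n+m+1+m),
      KerAt (flag (totalProl n m If) (k+1) ∪ {pbForm (m := m) (dcoord (tIdx n m))}) p x →
      KerAt (flag If k ∪ {dcoord (tIdx n m)}) (pr n m p) (pr n m x) := by
    intro x hx σ' hσ'
    rcases hσ' with h | h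
    · exact hx _ (Or.inl (hC σ' h))
    · rw [Set.mem_singleton_iff] at h
      subst h
      exact hx _ (Or.inr rfl)
  have hkv := hkd v hv
  have hkw := hkd w hw
  have hv' : KerAt (flag If k) (pr n m p) (pr n m v) := fun θ' hθ' => hkv θ' (Or.inl hθ')
  have hw' : KerAt (flag If k) (pr n m p) (pr n m w) := fun θ' hθ' => hkw θ' (Or.inl hθ')
  -- decomposition
  set zv := v - lft n m (pr n m v) with hzvdef
  set zw := w - lft n m (pr n m w) with hzwdef
  have hzv : pr n m zv = 0 := by rw [hzvdef, map_sub, pr_lft, sub_self]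
  have hzw : pr n m zw = 0 := by rw [hzwdef, map_sub, pr_lft, sub_self]
  have hvdec : v = lft n m (pr n m v) + zv := by rw [hzvdef]; abel
  have hwdec : w = lft n m (pr n m w) + zw := by rw [hzwdef]; abel
  -- four terms
  have t4 : extDeriv1 ω p zv zw = 0 := by
    apply beta_vert_zero hA hω p zv zw hzv
    rw [hzw]
    exact fun θ' hθ' => (θ' (pr n m p)).map_zero
  have t3 : extDeriv1 ω p zv (lft n m (pr n m w)) = 0 := by
    apply beta_vert_zero hA hω p zv _ hzv
    rw [pr_lft]
    exact hw'
  have t2 : extDeriv1 ω p (lft n m (pr n m v)) zw = 0 := by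
    rw [extDeriv_antisymm]
    rw [beta_vert_zero hA hω p zw _ hzw (by rw [pr_lft]; exact hv')]
    ring
  have t1 : extDeriv1 ω p (lft n m (pr n m v)) (lft n m (pr n m w)) = 0 := by
    set lam0 : Fin m → ℝ := fun α => p (Fin.natAdd (n+m+1) α) with hlam0
    have hembp : emb n m lam0 (pr n m p) = p := emb_pr_vp p
    have hrw := extDeriv_res hd lam0 (pr n m p) (pr n m v) (pr n m w)
    rw [hembp] at hrw
    rw [← hrw]
    exact ideal_eval_zero (hfrobk (res ω lam0) (Or.inl (hR ω hω lam0)) (pr n m p)) hkv hkw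
  calc extDeriv1 ω p v w
      = extDeriv1 ω p (lft n m (pr n m v) + zv) (lft n m (pr n m w) + zw) := by
        rw [← hvdec, ← hwdec]
    _ = 0 := by
        rw [extDeriv_add_left _ hd, extDeriv_add_right _ hd, extDeriv_add_right _ hd,
          t1, t2, t3, t4]
        ring

lemma frob_down
    (hsm : ∀ ω ∈ If, ∀ w, Differentiable ℝ fun p => ω p w)
    (hrank : ∀ p, Module.finrank ℝ (spanAt If p) = n)
    (hspan : ∀ p, spanAt If p ⊔ Submodule.span ℝ
      (Set.range (fun α : Fin m => dcoord (uIdx n m α) p) ∪ {dcoord (tIdx n m) p}) = ⊤)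
    (k : ℕ)
    (hfrob : IsFrobenius (flag (totalProl n m If) (k+1) ∪ {pbForm (m := m) (dcoord (tIdx n m))})) :
    IsFrobenius (flag If k ∪ {dcoord (tIdx n m)}) := by
  obtain ⟨hA, hC, hR⟩ := ACR hsm hrank hspan k
  intro θ hθ x
  rcases hθ with hθ | hτ
  swap
  · rw [Set.mem_singleton_iff] at hτ
    subst hτ
    exact inIdeal2At_zero _ _ _ (extDeriv_dcoord (tIdx n m) x)
  have hd := flag_diff hθ
  apply inIdeal2At_of_ker _ _ _
    (extDeriv_add_left _ hd x) (extDeriv_smul_left _ hd x) (extDeriv_antisymm _ x)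
  intro v w hv hw
  have kerUp : ∀ u : Pt (n+m+1), KerAt (flag If k ∪ {dcoord (tIdx n m)}) x u →
      KerAt (flag (totalProl n m If) (k+1) ∪ {pbForm (m := m) (dcoord (tIdx n m))})
        (emb n m 0 x) (lft n m u) := by
    intro u hu σ hσ
    rcases hσ with h | h
    · apply upA_kill hA h
      rw [pr_emb, pr_lft]
      exact fun θ' hθ' => hu θ' (Or.inl hθ')
    · rw [Set.mem_singleton_iff] at h
      subst h
      have h1 : pbForm (m := m) (dcoord (tIdx n m)) (emb n m 0 x) (lft n m u) =
          dcoord (tIdx n m) x u := by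
        rw [pb_apply, pr_emb, pr_lft]
      rw [h1]
      exact hu _ (Or.inr rfl)
  have hq := hfrob (pbForm (m := m) θ) (Or.inl (hC θ hθ)) (emb n m 0 x)
  have h1 := ideal_eval_zero hq (kerUp v hv) (kerUp w hw)
  rw [extDeriv_pb hd, pr_emb, pr_lft, pr_lft] at h1
  exact h1

end Assemble
end Aux
/-- A control-type system `(M, I; dt)` of type `(n, m)` is strongly linear if and
only if its total prolongation `(pr⁽¹⁾M, pr⁽¹⁾I; dt)` is strongly linear. -/
theorem stmt16 (n m : ℕ) (If : Set (Form1 (n + m + 1)))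
    (hsm : ∀ ω ∈ If, ∀ w, Differentiable ℝ fun p => ω p w)
    (hrank : ∀ p, Module.finrank ℝ (spanAt If p) = n)
    (hspan : ∀ p, spanAt If p ⊔ Submodule.span ℝ
      (Set.range (fun α : Fin m => dcoord (uIdx n m α) p) ∪ {dcoord (tIdx n m) p}) = ⊤)
    (hCTS : ∀ ω ∈ If, ∀ p,
      InIdeal2At (If ∪ {dcoord (tIdx n m)}) p (extDeriv1 ω p)) :
    StronglyLinear If (dcoord (tIdx n m)) ↔
      StronglyLinear (totalProl n m If)
        (pbForm (m := m) (dcoord (tIdx n m))) := by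
  classical
  constructor
  · rintro ⟨⟨k0, hvan⟩, hfrob⟩
    constructor
    · refine ⟨k0 + 1, ?_⟩
      intro ω hω p w
      obtain ⟨hA, hC, hR⟩ := Aux.ACR hsm hrank hspan k0
      obtain ⟨φ, hφ, heq⟩ := hA ω hω p
      rw [heq]
      show φ (Aux.pr n m w) = 0
      exact Aux.spanAt_kill hφ (fun σ hσ => hvan σ hσ _ _)
    · intro k
      cases k with
      | zero => exact Aux.frob_up0 hsm hspan
      | succ k => exact Aux.frob_up hsm hrank hspan k (hfrob k)
  · rintro ⟨⟨K0, hvan⟩, hfrob⟩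
    constructor
    · have hvan' : ∀ ω ∈ flag (totalProl n m If) (K0+1), ∀ p w, ω p w = 0 :=
        Aux.flag_van_succ hvan
      refine ⟨K0, ?_⟩
      intro θ hθ x v
      obtain ⟨hA, hC, hR⟩ := Aux.ACR hsm hrank hspan K0
      have h1 := hvan' _ (hC θ hθ) (Aux.emb n m 0 x) (Aux.lft n m v)
      rw [Aux.pb_apply, Aux.pr_emb, Aux.pr_lft] at h1
      exact h1
    · intro k
      exact Aux.frob_down hsm hrank hspan k (hfrob (k+1))
end
end
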